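/- arXiv:math/0503327 — 6 statements merged into one kernel-verified Lean document; each statement's English description precedes it below -/
import Mathlib

section
/- Let M be a matching on [2m] with base w, and let M̄ be its reversal, the matching whose edges are {2m+1-j, 2m+1-i} for each edge {i,j} of M; the base of M̄ is the Dyck word w̄ defined by w̄_i = 1 - w_{2m+1-i}. Then for every k ≥ 3, M contains C_k if and only if M̄ contains C_k; consequently g(m,w,𝒞) = g(m,w̄,𝒞) for every Dyck word w of length 2m. -/
/-- `G` is a matching on the vertex set `[n] = {1,…,n}`:
every edge has both endpoints in `[n]`, and every vertex of `[n]` has exactly one neighbour. -/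
def IsMatchingOn (n : ℕ) (G : SimpleGraph ℕ) : Prop :=
  (∀ u v : ℕ, G.Adj u v → 1 ≤ u ∧ u ≤ n ∧ 1 ≤ v ∧ v ≤ n) ∧
  (∀ v : ℕ, 1 ≤ v → v ≤ n → ∃! u : ℕ, G.Adj v u)

/-- `G` contains `H`: there is a monotone edge-preserving injection from the
vertices of `H` to those of `G`. -/
def ContainsPat (G H : SimpleGraph ℕ) : Prop :=
  ∃ f : ℕ → ℕ, StrictMono f ∧ ∀ u v : ℕ, H.Adj u v → G.Adj (f u) (f v)

/-- `w` (on positions `1,…,n`) is a Dyck word of length `n`: exactly half of its letters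
are `1` (`true`), and every prefix has at most half of its letters equal to `1`. -/
def IsDyckWord (n : ℕ) (w : ℕ → Bool) : Prop :=
  2 * ((Finset.Icc 1 n).filter fun i => w i = true).card = n ∧
  ∀ k : ℕ, k ≤ n → 2 * ((Finset.Icc 1 k).filter fun i => w i = true).card ≤ k

/-- The matching `G` on `[n]` has base `w`: `w i = 1` iff `i` is an r-vertex. -/
def HasBase (n : ℕ) (G : SimpleGraph ℕ) (w : ℕ → Bool) : Prop :=
  ∀ i : ℕ, 1 ≤ i → i ≤ n → (w i = true ↔ ∃ j : ℕ, j < i ∧ G.Adj i j)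

/-- The matching `M_123` on `[6]`, with edges `{1,4},{2,5},{3,6}`. -/
def M123 : SimpleGraph ℕ := SimpleGraph.fromRel fun u v => (u, v) ∈ [(1,4),(2,5),(3,6)]
/-- The matching `M_132` on `[6]`, with edges `{1,4},{2,6},{3,5}`. -/
def M132 : SimpleGraph ℕ := SimpleGraph.fromRel fun u v => (u, v) ∈ [(1,4),(2,6),(3,5)]
/-- The matching `M_213` on `[6]`, with edges `{1,5},{2,4},{3,6}`. -/
def M213 : SimpleGraph ℕ := SimpleGraph.fromRel fun u v => (u, v) ∈ [(1,5),(2,4),(3,6)]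
/-- The matching `M_231` on `[6]`, with edges `{1,5},{2,6},{3,4}`. -/
def M231 : SimpleGraph ℕ := SimpleGraph.fromRel fun u v => (u, v) ∈ [(1,5),(2,6),(3,4)]
/-- The matching `M_321` on `[6]`, with edges `{1,6},{2,5},{3,4}`. -/
def M321 : SimpleGraph ℕ := SimpleGraph.fromRel fun u v => (u, v) ∈ [(1,6),(2,5),(3,4)]

/-- The matching `C_k` on `[2k]`, with edges `{2i-1, 2i+2}` for `1 ≤ i < k`
together with the edge `{2, 2k-1}`. -/
def Ck (k : ℕ) : SimpleGraph ℕ :=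
  SimpleGraph.fromRel fun u v =>
    (∃ i : ℕ, 1 ≤ i ∧ i < k ∧ u = 2*i - 1 ∧ v = 2*i + 2) ∨ (u = 2 ∧ v = 2*k - 1)

/-- `G[k]`: the subgraph of `G` induced by the vertex set `[k]`. -/
def restrictG (G : SimpleGraph ℕ) (k : ℕ) : SimpleGraph ℕ :=
  SimpleGraph.fromRel fun u v => G.Adj u v ∧ u ≤ k ∧ v ≤ k

/-- A stub of a graph on `[k]`: an isolated vertex. -/
def IsStubOn (k : ℕ) (G : SimpleGraph ℕ) (v : ℕ) : Prop :=
  1 ≤ v ∧ v ≤ k ∧ ∀ u : ℕ, ¬ G.Adj v u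

/-- The relation `∼`: `u ∼ v` iff `u = v` or some edge `{x,y}` satisfies
`x < u < y` and `x < v < y`. -/
def SimRel (G : SimpleGraph ℕ) (u v : ℕ) : Prop :=
  u = v ∨ ∃ x y : ℕ, G.Adj x y ∧ x < u ∧ u < y ∧ x < v ∧ v < y

/-- The edges `{a,b}` and `{c,d}` (with `a < b`, `c < d`) cross. -/
def EdgesCross (a b c d : ℕ) : Prop :=
  (a < c ∧ c < b ∧ b < d) ∨ (c < a ∧ a < d ∧ d < b)

/-- The relation `≈`: `u ≈ v` iff `u = v` or there is a sequence of edges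
`e_1,…,e_p` (`p ≥ 1`), consecutive ones crossing, with `e_1` spanning `u` and `e_p` spanning `v`. -/
def ApproxRel (G : SimpleGraph ℕ) (u v : ℕ) : Prop :=
  u = v ∨ ∃ p : ℕ, 1 ≤ p ∧ ∃ x y : ℕ → ℕ,
    (∀ i : ℕ, i < p → x i < y i ∧ G.Adj (x i) (y i)) ∧
    (∀ i : ℕ, i + 1 < p → EdgesCross (x i) (y i) (x (i+1)) (y (i+1))) ∧
    x 0 < u ∧ u < y 0 ∧ x (p-1) < v ∧ v < y (p-1)

/-- The reversal of a matching on `[n]`: the edges of `M̄` are `{n+1-j, n+1-i}`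
for each edge `{i,j}` of `M`. -/
def reverseMatch (n : ℕ) (G : SimpleGraph ℕ) : SimpleGraph ℕ :=
  SimpleGraph.fromRel fun u v => ∃ a b : ℕ, G.Adj a b ∧ u = n + 1 - b ∧ v = n + 1 - a

/- ---------- Auxiliary lemmas ---------- -/

lemma rev_adj (n : ℕ) (G : SimpleGraph ℕ) (u v : ℕ) :
    (reverseMatch n G).Adj u v ↔ u ≠ v ∧
      ((∃ a b, G.Adj a b ∧ u = n + 1 - b ∧ v = n + 1 - a) ∨
       (∃ a b, G.Adj a b ∧ v = n + 1 - b ∧ u = n + 1 - a)) :=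
  SimpleGraph.fromRel_adj _ u v

lemma rev_adj_of {n : ℕ} {G : SimpleGraph ℕ} {a b : ℕ} (h : G.Adj a b)
    (ha : 1 ≤ a) (hb : b ≤ n) :
    (reverseMatch n G).Adj (n + 1 - b) (n + 1 - a) := by
  rw [rev_adj]
  refine ⟨?_, Or.inl ⟨a, b, h, rfl, rfl⟩⟩
  have := h.ne
  omega

lemma rev_edgesIn {n : ℕ} {G : SimpleGraph ℕ}
    (h : ∀ u v : ℕ, G.Adj u v → 1 ≤ u ∧ u ≤ n ∧ 1 ≤ v ∧ v ≤ n) :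
    ∀ u v : ℕ, (reverseMatch n G).Adj u v → 1 ≤ u ∧ u ≤ n ∧ 1 ≤ v ∧ v ≤ n := by
  intro u v huv
  rw [rev_adj] at huv
  rcases huv with ⟨hne, ⟨a, b, hab, hu, hv⟩ | ⟨a, b, hab, hv, hu⟩⟩ <;>
    · have := h a b hab; omega

lemma rev_rev {n : ℕ} {G : SimpleGraph ℕ}
    (h : ∀ u v : ℕ, G.Adj u v → 1 ≤ u ∧ u ≤ n ∧ 1 ≤ v ∧ v ≤ n) :
    reverseMatch n (reverseMatch n G) = G := by
  apply SimpleGraph.ext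
  funext u v
  apply propext
  constructor
  · intro huv
    rw [rev_adj] at huv
    rcases huv with ⟨hne, ⟨a, b, hab, hu, hv⟩ | ⟨a, b, hab, hv, hu⟩⟩ <;>
    · rw [rev_adj] at hab
      rcases hab with ⟨hne', ⟨c, d, hcd, hc, hd⟩ | ⟨c, d, hcd, hd, hc⟩⟩ <;>
      · have hbd := h c d hcd
        first
          | (have h1 : u = c := by omega
             have h2 : v = d := by omega
             rw [h1, h2]; exact hcd)
          | (have h1 : u = d := by omega
             have h2 : v = c := by omega
             rw [h1, h2]; exact hcd.symm)
  · intro huv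
    have hbd := h u v huv
    have h1 : (reverseMatch n G).Adj (n + 1 - v) (n + 1 - u) :=
      rev_adj_of huv (by omega) (by omega)
    have h2 : (reverseMatch n (reverseMatch n G)).Adj (n + 1 - (n + 1 - u)) (n + 1 - (n + 1 - v)) :=
      rev_adj_of h1 (by omega) (by omega)
    have e1 : n + 1 - (n + 1 - u) = u := by omega
    have e2 : n + 1 - (n + 1 - v) = v := by omega
    rwa [e1, e2] at h2

lemma rev_matching {n : ℕ} {G : SimpleGraph ℕ} (h : IsMatchingOn n G) :
    IsMatchingOn n (reverseMatch n G) := by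
  refine ⟨rev_edgesIn h.1, ?_⟩
  intro v hv1 hvn
  obtain ⟨u, hu, huniq⟩ := h.2 (n + 1 - v) (by omega) (by omega)
  have hub := h.1 _ _ hu
  refine ⟨n + 1 - u, ?_, ?_⟩
  · show (reverseMatch n G).Adj v (n + 1 - u)
    rw [rev_adj]
    have hune := hu.ne
    refine ⟨?_, Or.inl ⟨u, n + 1 - v, hu.symm, ?_, rfl⟩⟩
    · clear * - hune hub hv1 hvn; omega
    · clear * - hv1 hvn; omega
  · intro x hx
    rw [rev_adj] at hx
    rcases hx with ⟨hne, ⟨a, b, hab, hva, hxa⟩ | ⟨a, b, hab, hxa, hva⟩⟩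
    · have hb := h.1 a b hab
      have hbv : b = n + 1 - v := by clear * - hva hb hv1 hvn; omega
      have hau : a = u := huniq a (by rw [hbv] at hab; exact hab.symm)
      clear * - hxa hau; omega
    · have hb := h.1 a b hab
      have hav : a = n + 1 - v := by clear * - hva hb hv1 hvn; omega
      have hbu : b = u := huniq b (by rw [hav] at hab; exact hab)
      clear * - hxa hbu; omega

lemma rev_base {n : ℕ} {G : SimpleGraph ℕ} {w : ℕ → Bool}
    (hM : IsMatchingOn n G) (hb : HasBase n G w) :
    HasBase n (reverseMatch n G) (fun i => !(w (n + 1 - i))) := by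
  intro i h1 hn
  obtain ⟨u, hu, huniq⟩ := hM.2 (n + 1 - i) (by omega) (by omega)
  have hub := hM.1 _ _ hu
  have hune := hu.ne
  have hbase := hb (n + 1 - i) (by omega) (by omega)
  constructor
  · intro hwt
    have hwf : w (n + 1 - i) = false := by
      simpa using hwt
    have hnolt : ¬ ∃ j, j < n + 1 - i ∧ G.Adj (n + 1 - i) j := by
      intro hj
      rw [← hbase] at hj
      rw [hj] at hwf
      exact absurd hwf (by simp)
    have hgt : n + 1 - i < u := by
      rcases lt_trichotomy u (n + 1 - i) with hlt | heq | hgt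
      · exact absurd ⟨u, hlt, hu⟩ hnolt
      · exact (hune heq.symm).elim
      · exact hgt
    refine ⟨n + 1 - u, by omega, ?_⟩
    rw [rev_adj]
    refine ⟨?_, Or.inl ⟨u, n + 1 - i, hu.symm, ?_, rfl⟩⟩
    · clear * - hub h1 hn hgt; omega
    · clear * - h1 hn; omega
  · rintro ⟨j, hj, hadj⟩
    rw [rev_adj] at hadj
    have hgt : n + 1 - i < u := by
      rcases hadj with ⟨hne, ⟨a, b, hab, hia, hja⟩ | ⟨a, b, hab, hja, hia⟩⟩
      · have hab2 := hM.1 a b hab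
        have hbi : b = n + 1 - i := by clear * - hia hab2 h1 hn; omega
        have hau : a = u := huniq a (by rw [hbi] at hab; exact hab.symm)
        omega
      · have hab2 := hM.1 a b hab
        have hai : a = n + 1 - i := by clear * - hia hab2 h1 hn; omega
        have hbu : b = u := huniq b (by rw [hai] at hab; exact hab)
        omega
    have hwf : w (n + 1 - i) = false := by
      rcases hwval : w (n + 1 - i) with _ | _
      · rfl
      · exfalso
        obtain ⟨j', hj', hadj'⟩ := hbase.1 hwval
        have : j' = u := huniq j' hadj'
        omega
    simp [hwf]

lemma hasBase_congr {n : ℕ} {G : SimpleGraph ℕ} {w w' : ℕ → Bool}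
    (h : ∀ i, 1 ≤ i → i ≤ n → w i = w' i) (hb : HasBase n G w) : HasBase n G w' := by
  intro i h1 h2
  rw [← h i h1 h2]
  exact hb i h1 h2

lemma count_rev (n k : ℕ) (hk : k ≤ n) (w : ℕ → Bool) :
    ((Finset.Icc 1 k).filter fun i => (!(w (n + 1 - i))) = true).card
      = k - (((Finset.Icc 1 n).filter fun i => w i = true).card
             - ((Finset.Icc 1 (n - k)).filter fun i => w i = true).card) := by
  classical
  have h1 : ((Finset.Icc 1 k).filter fun i => (!(w (n + 1 - i))) = true)
      = ((Finset.Icc 1 k).filter fun i => ¬ (w (n + 1 - i) = true)) := by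
    apply Finset.filter_congr
    intro i _
    simp
  have h2 : ((Finset.Icc 1 k).filter fun i => w (n + 1 - i) = true).card
      = ((Finset.Icc (n - k + 1) n).filter fun j => w j = true).card := by
    apply Finset.card_bij' (fun i _ => n + 1 - i) (fun j _ => n + 1 - j)
    · intro a ha
      simp only [Finset.mem_filter, Finset.mem_Icc] at ha ⊢
      exact ⟨by omega, ha.2⟩
    · intro a ha
      simp only [Finset.mem_filter, Finset.mem_Icc] at ha ⊢
      refine ⟨by omega, ?_⟩
      have he : n + 1 - (n + 1 - a) = a := by omega
      rw [he]
      exact ha.2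
    · intro a ha
      simp only [Finset.mem_filter, Finset.mem_Icc] at ha
      omega
    · intro a ha
      simp only [Finset.mem_filter, Finset.mem_Icc] at ha
      omega
  have h3 : ((Finset.Icc 1 k).filter fun i => ¬ (w (n + 1 - i) = true)).card
      = k - ((Finset.Icc 1 k).filter fun i => w (n + 1 - i) = true).card := by
    have := Finset.card_filter_add_card_filter_not
      (s := Finset.Icc 1 k) (p := fun i => w (n + 1 - i) = true)
    have hc : (Finset.Icc 1 k).card = k := by
      rw [Nat.card_Icc]
      omega
    omega
  have hsplit : (Finset.Icc 1 (n - k)) ∪ (Finset.Icc (n - k + 1) n) = Finset.Icc 1 n := by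
    ext x
    simp only [Finset.mem_union, Finset.mem_Icc]
    omega
  have hdisj : Disjoint ((Finset.Icc 1 (n - k)).filter fun i => w i = true)
      ((Finset.Icc (n - k + 1) n).filter fun i => w i = true) := by
    rw [Finset.disjoint_left]
    intro x hx hx'
    simp only [Finset.mem_filter, Finset.mem_Icc] at hx hx'
    omega
  have h4 : ((Finset.Icc 1 n).filter fun i => w i = true).card
      = ((Finset.Icc 1 (n - k)).filter fun i => w i = true).card
        + ((Finset.Icc (n - k + 1) n).filter fun i => w i = true).card := by
    rw [← hsplit, Finset.filter_union, Finset.card_union_of_disjoint hdisj]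
  rw [h1, h3, h2]
  omega

lemma rev_dyck (m : ℕ) (w : ℕ → Bool) (hw : IsDyckWord (2*m) w) :
    IsDyckWord (2*m) (fun i => !(w (2*m + 1 - i))) := by
  have hzero : ((Finset.Icc 1 (2*m - 2*m)).filter fun i => w i = true).card = 0 := by
    simp
  constructor
  · show 2 * ((Finset.Icc 1 (2*m)).filter fun i => (!(w (2*m + 1 - i))) = true).card = 2*m
    have := count_rev (2*m) (2*m) le_rfl w
    rw [hzero] at this
    have htot := hw.1
    omega
  · intro k hk
    show 2 * ((Finset.Icc 1 k).filter fun i => (!(w (2*m + 1 - i))) = true).card ≤ k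
    have := count_rev (2*m) k hk w
    have htot := hw.1
    have hpre := hw.2 (2*m - k) (by omega)
    omega

/-- The reversing vertex map used to show containment of `C_k` is preserved. -/
def revg (n k : ℕ) (f : ℕ → ℕ) (v : ℕ) : ℕ :=
  if v ≤ 2*k then n + 1 - f (2*k + 1 - v) else n + 1 - f 1 + (v - 2*k)

lemma rev_contains {n k : ℕ} {G : SimpleGraph ℕ}
    (hG : ∀ u v : ℕ, G.Adj u v → 1 ≤ u ∧ u ≤ n ∧ 1 ≤ v ∧ v ≤ n)
    (hk : 3 ≤ k) (h : ContainsPat G (Ck k)) :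
    ContainsPat (reverseMatch n G) (Ck k) := by
  obtain ⟨f, hf, hpres⟩ := h
  have adj14 : (Ck k).Adj 1 4 := by
    rw [Ck, SimpleGraph.fromRel_adj]
    exact ⟨by norm_num, Or.inl (Or.inl ⟨1, le_rfl, by omega, by norm_num, by norm_num⟩)⟩
  have adjlast : (Ck k).Adj (2*k - 3) (2*k) := by
    rw [Ck, SimpleGraph.fromRel_adj]
    exact ⟨by omega, Or.inl (Or.inl ⟨k - 1, by omega, by omega, by omega, by omega⟩)⟩
  have hf1 : 1 ≤ f 1 := (hG _ _ (hpres _ _ adj14)).1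
  have hf2k : f (2*k) ≤ n := (hG _ _ (hpres _ _ adjlast)).2.2.2
  have hfl : ∀ v, 1 ≤ v → 1 ≤ f v := fun v hv => le_trans hf1 (hf.monotone hv)
  have hfu : ∀ v, v ≤ 2*k → f v ≤ n := fun v hv => le_trans (hf.monotone hv) hf2k
  have hg : StrictMono (revg n k f) := by
    intro u v huv
    unfold revg
    split_ifs with hu hv hv
    · have h1 : 2*k + 1 - v < 2*k + 1 - u := by omega
      have h2 : f (2*k + 1 - v) < f (2*k + 1 - u) := hf h1
      have h3 : f (2*k + 1 - v) ≤ n := hfu _ (by omega)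
      omega
    · have h2 : f 1 ≤ f (2*k + 1 - u) := hf.monotone (by omega)
      omega
    · omega
    · omega
  refine ⟨revg n k f, hg, ?_⟩
  have key : ∀ a b : ℕ,
      ((∃ i, 1 ≤ i ∧ i < k ∧ a = 2*i - 1 ∧ b = 2*i + 2) ∨ (a = 2 ∧ b = 2*k - 1)) →
      (reverseMatch n G).Adj (revg n k f a) (revg n k f b) := by
    intro a b hab
    have hbnd : 1 ≤ a ∧ a < b ∧ b ≤ 2*k := by
      rcases hab with ⟨i, hi1, hi2, ha, hb⟩ | ⟨ha, hb⟩ <;> omega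
    obtain ⟨hb1, hb2, hb3⟩ := hbnd
    have hrefl : (Ck k).Adj (2*k + 1 - b) (2*k + 1 - a) := by
      rw [Ck, SimpleGraph.fromRel_adj]
      refine ⟨by omega, Or.inl ?_⟩
      rcases hab with ⟨i, hi1, hi2, ha, hb⟩ | ⟨ha, hb⟩
      · exact Or.inl ⟨k - i, by omega, by omega, by omega, by omega⟩
      · exact Or.inr ⟨by omega, by omega⟩
    have hGadj := hpres _ _ hrefl
    rw [rev_adj]
    refine ⟨(hg (show a < b from hb2)).ne, Or.inl
      ⟨f (2*k + 1 - b), f (2*k + 1 - a), hGadj, ?_, ?_⟩⟩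
    · unfold revg
      rw [if_pos (by omega : a ≤ 2*k)]
    · unfold revg
      rw [if_pos (by omega : b ≤ 2*k)]
  intro u v huv
  rw [Ck, SimpleGraph.fromRel_adj] at huv
  rcases huv.2 with hrel | hrel
  · exact key u v hrel
  · exact (key v u hrel).symm

/-- for a matching `M` on `[2m]` with base `w`, the reversal `M̄` has base
the Dyck word `w̄` given by `w̄ i = 1 - w (2m+1-i)`; for every `k ≥ 3`, `M` contains `C_k`
iff `M̄` contains `C_k`; and consequently `g(m,w,𝒞) = g(m,w̄,𝒞)`. -/
theorem stmt2 (m : ℕ) (w : ℕ → Bool) (hw : IsDyckWord (2*m) w)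
    (M : SimpleGraph ℕ) (hM : IsMatchingOn (2*m) M) (hbase : HasBase (2*m) M w) :
    (IsDyckWord (2*m) (fun i => !(w (2*m + 1 - i))) ∧
      HasBase (2*m) (reverseMatch (2*m) M) (fun i => !(w (2*m + 1 - i)))) ∧
    (∀ k : ℕ, 3 ≤ k → (ContainsPat M (Ck k) ↔ ContainsPat (reverseMatch (2*m) M) (Ck k))) ∧
    Nat.card {G : SimpleGraph ℕ // IsMatchingOn (2*m) G ∧ HasBase (2*m) G w ∧
      ∀ k : ℕ, 3 ≤ k → ¬ ContainsPat G (Ck k)} =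
    Nat.card {G : SimpleGraph ℕ // IsMatchingOn (2*m) G ∧
      HasBase (2*m) G (fun i => !(w (2*m + 1 - i))) ∧
      ∀ k : ℕ, 3 ≤ k → ¬ ContainsPat G (Ck k)} := by
  have hrevM := rev_matching hM
  refine ⟨⟨rev_dyck m w hw, rev_base hM hbase⟩, ?_, ?_⟩
  · intro k hk
    constructor
    · exact rev_contains hM.1 hk
    · intro h
      have h2 := rev_contains hrevM.1 hk h
      rwa [rev_rev hM.1] at h2
  · apply Nat.card_congr
    refine ⟨fun G => ⟨reverseMatch (2*m) G.1, ?_⟩, fun G => ⟨reverseMatch (2*m) G.1, ?_⟩,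
      ?_, ?_⟩
    · obtain ⟨hG, hGb, hGav⟩ := G.2
      refine ⟨rev_matching hG, rev_base hG hGb, fun k hk hc => hGav k hk ?_⟩
      have h2 := rev_contains (rev_matching hG).1 hk hc
      rwa [rev_rev hG.1] at h2
    · obtain ⟨hG, hGb, hGav⟩ := G.2
      refine ⟨rev_matching hG, ?_, fun k hk hc => hGav k hk ?_⟩
      · refine hasBase_congr ?_ (rev_base hG hGb)
        intro i h1 h2
        have he : 2*m + 1 - (2*m + 1 - i) = i := by omega
        simp [he]
      · have h2 := rev_contains (rev_matching hG).1 hk hc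
        rwa [rev_rev hG.1] at h2
    · intro G
      exact Subtype.ext (rev_rev G.2.1.1)
    · intro G
      exact Subtype.ext (rev_rev G.2.1.1)
end

section
/- For every k ≥ 4, the matching C_k (on vertex set [2k], with edges {2i-1, 2i+2} for 1 ≤ i < k together with the edge {2, 2k-1}) avoids M_123; equivalently, C_k contains no three pairwise crossing edges. -/
lemma ck_adj_char (k : ℕ) (hk : 4 ≤ k) {u v : ℕ} (huv : u < v) (h : (Ck k).Adj u v) :
    (∃ i : ℕ, 1 ≤ i ∧ i < k ∧ u = 2*i - 1 ∧ v = 2*i + 2) ∨ (u = 2 ∧ v = 2*k - 1) := by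
  rw [Ck, SimpleGraph.fromRel_adj] at h
  rcases h with ⟨-, h | h⟩
  · exact h
  · rcases h with ⟨i, h1, h2, h3, h4⟩ | ⟨h1, h2⟩ <;> omega

/-- for every `k ≥ 4`, the matching `C_k` avoids `M_123`. -/
theorem stmt5 (k : ℕ) (hk : 4 ≤ k) : ¬ ContainsPat (Ck k) M123 := by
  rintro ⟨f, hmono, hadj⟩
  have h14 : (Ck k).Adj (f 1) (f 4) := by
    apply hadj; rw [M123, SimpleGraph.fromRel_adj]; simp
  have h25 : (Ck k).Adj (f 2) (f 5) := by
    apply hadj; rw [M123, SimpleGraph.fromRel_adj]; simp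
  have h36 : (Ck k).Adj (f 3) (f 6) := by
    apply hadj; rw [M123, SimpleGraph.fromRel_adj]; simp
  have m12 : f 1 < f 2 := hmono (by norm_num)
  have m23 : f 2 < f 3 := hmono (by norm_num)
  have m34 : f 3 < f 4 := hmono (by norm_num)
  have m45 : f 4 < f 5 := hmono (by norm_num)
  have m56 : f 5 < f 6 := hmono (by norm_num)
  have c1 := ck_adj_char k hk (by omega) h14
  have c2 := ck_adj_char k hk (by omega) h25
  have c3 := ck_adj_char k hk (by omega) h36
  rcases c1 with ⟨i, hi1, hi2, hi3, hi4⟩ | ⟨hi3, hi4⟩ <;>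
    rcases c2 with ⟨j, hj1, hj2, hj3, hj4⟩ | ⟨hj3, hj4⟩ <;>
      rcases c3 with ⟨l, hl1, hl2, hl3, hl4⟩ | ⟨hl3, hl4⟩ <;> omega
end

section
/- Fix a positive integer m, a Dyck word w of length 2m, and k ∈ [2m]. A graph G' on the vertex set [k] satisfies G' = G[k] for some matching G on [2m] with base w avoiding M_132 if and only if the following three conditions hold: (a) G' is consistent with w; (b) G' avoids M_132; (c) there is no sequence of five vertices x_1 < x_2 < x_3 < x_4 < x_5 in [k] such that x_2 is a stub of G' while {x_1,x_4} and {x_3,x_5} are edges of G'. -/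
theorem restrict_adj (G : SimpleGraph ℕ) (k u v : ℕ) :
    (restrictG G k).Adj u v ↔ G.Adj u v ∧ u ≤ k ∧ v ≤ k := by
  simp only [restrictG, SimpleGraph.fromRel_adj]
  constructor
  · rintro ⟨hne, ⟨h, hu, hv⟩ | ⟨h, hv, hu⟩⟩
    · exact ⟨h, hu, hv⟩
    · exact ⟨h.symm, hu, hv⟩
  · rintro ⟨h, hu, hv⟩
    exact ⟨h.ne, Or.inl ⟨h, hu, hv⟩⟩

theorem M132_adj_cases (u v : ℕ) (h : M132.Adj u v) :
    (u=1∧v=4)∨(u=4∧v=1)∨(u=2∧v=6)∨(u=6∧v=2)∨(u=3∧v=5)∨(u=5∧v=3) := by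
  simp only [M132, SimpleGraph.fromRel_adj, List.mem_cons, List.mem_singleton,
    Prod.mk.injEq, List.not_mem_nil, or_false] at h
  tauto

theorem M132_adjs : M132.Adj 1 4 ∧ M132.Adj 2 6 ∧ M132.Adj 3 5 := by
  refine ⟨?_, ?_, ?_⟩ <;> simp [M132, SimpleGraph.fromRel_adj]

theorem rankLemma (N : ℕ) (i : Fin N) (T : Finset ℕ) (h : T.card = N) :
    (T.filter (fun x => x ≤ (T.orderIsoOfFin h i : ℕ))).card = (i : ℕ) + 1 := by
  classical
  set e := T.orderIsoOfFin h with he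
  have himg : T.filter (fun x => x ≤ (e i : ℕ)) = Finset.image (fun j : Fin N => (e j : ℕ)) (Finset.Iic i) := by
    ext x
    simp only [Finset.mem_filter, Finset.mem_image, Finset.mem_Iic]
    constructor
    · rintro ⟨hx, hle⟩
      refine ⟨e.symm ⟨x, hx⟩, ?_, by simp⟩
      have h2 : e (e.symm ⟨x, hx⟩) ≤ e i := by
        rw [e.apply_symm_apply]
        exact Subtype.coe_le_coe.mp hle
      exact e.le_iff_le.mp h2
    · rintro ⟨j, hj, rfl⟩
      exact ⟨(e j).2, Subtype.coe_le_coe.mpr (e.le_iff_le.mpr hj)⟩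
  rw [himg, Finset.card_image_of_injective _ (fun a b hab => e.injective (Subtype.coe_injective hab)), Fin.card_Iic]

theorem pairLt (S R : Finset ℕ) (N : ℕ) (hS : S.card = N) (hR : R.card = N)
    (hC : ∀ r ∈ R, (R.filter (fun x => x ≤ r)).card ≤ (S.filter (fun x => x < r)).card)
    (i : Fin N) : (S.orderIsoOfFin hS i : ℕ) < (R.orderIsoOfFin hR i : ℕ) := by
  classical
  by_contra hle
  push_neg at hle
  set s := (S.orderIsoOfFin hS i : ℕ) with hs
  set r := (R.orderIsoOfFin hR i : ℕ) with hr
  have h1 : (R.filter (fun x => x ≤ r)).card = (i : ℕ) + 1 := rankLemma N i R hR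
  have h2 : (S.filter (fun x => x ≤ s)).card = (i : ℕ) + 1 := rankLemma N i S hS
  have hsS : s ∈ S := (S.orderIsoOfFin hS i).2
  have heq : S.filter (fun x => x < s) = (S.filter (fun x => x ≤ s)).erase s := by
    ext x
    simp only [Finset.mem_filter, Finset.mem_erase]
    constructor
    · rintro ⟨hxS, hxlt⟩; exact ⟨by omega, hxS, by omega⟩
    · rintro ⟨hne, hxS, hxle⟩; exact ⟨hxS, by omega⟩
  have hmem : s ∈ S.filter (fun x => x ≤ s) := Finset.mem_filter.mpr ⟨hsS, le_refl s⟩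
  have h3 : (S.filter (fun x => x < s)).card = (i : ℕ) := by
    rw [heq, Finset.card_erase_of_mem hmem, h2]; omega
  have h4 : (S.filter (fun x => x < r)).card ≤ (S.filter (fun x => x < s)).card :=
    Finset.card_le_card (fun x hx => by
      simp only [Finset.mem_filter] at hx ⊢; exact ⟨hx.1, lt_of_lt_of_le hx.2 hle⟩)
  have h5 := hC r (R.orderIsoOfFin hR i).2
  omega

theorem fwd (m k : ℕ) (hm : 0 < m) (w : ℕ → Bool)
    (hk1 : 1 ≤ k) (hk : k ≤ 2*m) (G' : SimpleGraph ℕ)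
    (hG' : ∀ u v : ℕ, G'.Adj u v → 1 ≤ u ∧ u ≤ k ∧ 1 ≤ v ∧ v ≤ k)
    (G : SimpleGraph ℕ) (hGm : IsMatchingOn (2*m) G) (hGav : ¬ ContainsPat G M132)
    (hGr : restrictG G k = G') :
    (¬ ContainsPat G' M132) ∧
       (¬ ∃ x1 x2 x3 x4 x5 : ℕ, x1 < x2 ∧ x2 < x3 ∧ x3 < x4 ∧ x4 < x5 ∧
          IsStubOn k G' x2 ∧ G'.Adj x1 x4 ∧ G'.Adj x3 x5) := by
  have hGG : ∀ u v, G'.Adj u v → G.Adj u v := by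
    intro u v h
    rw [← hGr] at h
    exact ((restrict_adj G k u v).mp h).1
  constructor
  · rintro ⟨f, hf, hadj⟩
    exact hGav ⟨f, hf, fun u v h => hGG _ _ (hadj u v h)⟩
  · rintro ⟨x1, x2, x3, x4, x5, h12, h23, h34, h45, ⟨hx21, hx2k, hstub⟩, hE14, hE35⟩
    -- x2 has a partner y in G, and y > k
    obtain ⟨y, hy, -⟩ := hGm.2 x2 hx21 (le_trans hx2k hk)
    have hyk : k < y := by
      by_contra hyk
      push_neg at hyk
      exact hstub y (by rw [← hGr]; exact (restrict_adj G k x2 y).mpr ⟨hy, hx2k, hyk⟩)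
    have hx5k : x5 ≤ k := (hG' x3 x5 hE35).2.2.2
    have h5y : x5 < y := lt_of_le_of_lt hx5k hyk
    have h1x1 : 1 ≤ x1 := (hG' x1 x4 hE14).1
    refine hGav ⟨fun t => if t = 1 then x1 else if t = 2 then x2 else if t = 3 then x3
      else if t = 4 then x4 else if t = 5 then x5 else if t ≤ 0 then 0 else y + t - 6, ?_, ?_⟩
    · apply strictMono_nat_of_lt_succ
      intro t
      rcases t with _|_|_|_|_|_|t <;> simp <;> omega
    · intro u v h
      rcases M132_adj_cases u v h with ⟨rfl,rfl⟩|⟨rfl,rfl⟩|⟨rfl,rfl⟩|⟨rfl,rfl⟩|⟨rfl,rfl⟩|⟨rfl,rfl⟩ <;>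
        simp only [] <;> norm_num
      · exact hGG _ _ hE14
      · exact (hGG _ _ hE14).symm
      · exact hy
      · exact hy.symm
      · exact hGG _ _ hE35
      · exact (hGG _ _ hE35).symm

theorem bwd (m k : ℕ) (hm : 0 < m) (w : ℕ → Bool) (hw : IsDyckWord (2*m) w)
    (hk1 : 1 ≤ k) (hk : k ≤ 2*m) (G' G0 : SimpleGraph ℕ)
    (hG' : ∀ u v : ℕ, G'.Adj u v → 1 ≤ u ∧ u ≤ k ∧ 1 ≤ v ∧ v ≤ k)
    (hG0m : IsMatchingOn (2*m) G0) (hG0b : HasBase (2*m) G0 w) (hG0r : restrictG G0 k = G')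
    (hb : ¬ ContainsPat G' M132)
    (hc : ¬ ∃ x1 x2 x3 x4 x5 : ℕ, x1 < x2 ∧ x2 < x3 ∧ x3 < x4 ∧ x4 < x5 ∧
          IsStubOn k G' x2 ∧ G'.Adj x1 x4 ∧ G'.Adj x3 x5) :
    ∃ G : SimpleGraph ℕ, IsMatchingOn (2*m) G ∧ HasBase (2*m) G w ∧
        ¬ ContainsPat G M132 ∧ restrictG G k = G' := by
  classical
  set n := 2*m with hn
  have hG'adj : ∀ u v, G'.Adj u v ↔ (G0.Adj u v ∧ u ≤ k ∧ v ≤ k) := by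
    intro u v; rw [← hG0r]; exact restrict_adj G0 k u v
  have hG'G0 : ∀ u v, G'.Adj u v → G0.Adj u v := fun u v h => ((hG'adj u v).mp h).1
  have f1 : ∀ i, 1 ≤ i → i ≤ k → w i = true → ∃ j, j < i ∧ G'.Adj i j := by
    intro i h1 h2 hwi
    obtain ⟨j, hj, hadj⟩ := (hG0b i h1 (le_trans h2 hk)).mp hwi
    exact ⟨j, hj, (hG'adj i j).mpr ⟨hadj, h2, by omega⟩⟩
  have f2 : ∀ u v, G'.Adj u v → w u = false → u < v := by
    intro u v h hwu
    have hbnd := hG' u v h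
    have hbase := hG0b u hbnd.1 (le_trans hbnd.2.1 hk)
    have hne : ¬ ∃ j, j < u ∧ G0.Adj u j := by
      intro hex
      have := hbase.mpr hex
      rw [hwu] at this
      exact absurd this (by simp)
    have hadj := hG'G0 u v h
    have : ¬ (v < u) := fun hlt => hne ⟨v, hlt, hadj⟩
    have hne2 := hadj.ne
    omega
  have f3r : ∀ u v, G'.Adj u v → u < v → w v = true := by
    intro u v h hlt
    have hbnd := hG' u v h
    exact (hG0b v hbnd.2.2.1 (le_trans hbnd.2.2.2 hk)).mpr ⟨u, hlt, (hG'G0 u v h).symm⟩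
  have f3l : ∀ u v, G'.Adj u v → u < v → w u = false := by
    intro u v h hlt
    have hbnd := hG' u v h
    cases hwu : w u with
    | false => rfl
    | true =>
      obtain ⟨j, hj, hadj⟩ := (hG0b u hbnd.1 (le_trans hbnd.2.1 hk)).mp hwu
      obtain ⟨y, _, hy⟩ := hG0m.2 u hbnd.1 (le_trans hbnd.2.1 hk)
      have e1 : j = y := hy j hadj
      have e2 : v = y := hy v (hG'G0 u v h)
      omega
  have huniq : ∀ v a b, G'.Adj v a → G'.Adj v b → a = b := by
    intro v a b ha hb2
    obtain ⟨u, _, huu⟩ := hG0m.2 v (hG' v a ha).1 (le_trans (hG' v a ha).2.1 hk)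
    rw [huu a (hG'G0 _ _ ha), huu b (hG'G0 _ _ hb2)]
  set partner : ℕ → ℕ := fun v => if h : ∃ u, G'.Adj v u then h.choose else 0 with hpdef
  have hpadj : ∀ v, (∃ u, G'.Adj v u) → G'.Adj v (partner v) := by
    intro v h
    rw [hpdef]
    simp only [dif_pos h]
    exact h.choose_spec
  set S : Finset ℕ := (Finset.Icc 1 n).filter (fun i => w i = false ∧ ∀ j, ¬ G'.Adj i j) with hSdef
  set R : Finset ℕ := (Finset.Icc 1 n).filter (fun i => w i = true ∧ ∀ j, ¬ G'.Adj i j) with hRdef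
  have hSmem : ∀ x, x ∈ S ↔ (1 ≤ x ∧ x ≤ n ∧ w x = false ∧ ∀ j, ¬ G'.Adj x j) := by
    intro x; rw [hSdef]; simp only [Finset.mem_filter, Finset.mem_Icc]; tauto
  have hRmem : ∀ x, x ∈ R ↔ (1 ≤ x ∧ x ≤ n ∧ w x = true ∧ ∀ j, ¬ G'.Adj x j) := by
    intro x; rw [hRdef]; simp only [Finset.mem_filter, Finset.mem_Icc]; tauto
  have hRk : ∀ x ∈ R, k < x := by
    intro x hx
    rw [hRmem] at hx
    by_contra hxk
    push_neg at hxk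
    obtain ⟨j, _, hadj⟩ := f1 x hx.1 hxk hx.2.2.1
    exact hx.2.2.2 j hadj
  have hRmem' : ∀ x, x ∈ R ↔ (x ≤ n ∧ w x = true ∧ k < x) := by
    intro x
    constructor
    · intro hx
      exact ⟨((hRmem x).mp hx).2.1, ((hRmem x).mp hx).2.2.1, hRk x hx⟩
    · rintro ⟨hxn, hwx, hkx⟩
      exact (hRmem x).mpr ⟨by omega, hxn, hwx, fun j hadj => by
        have := (hG' x j hadj).2.1; omega⟩
  -- the matched-false vertices biject with true positions in [1,k]
  have MB : ((Finset.Icc 1 k).filter (fun i => w i = false ∧ ¬ ∀ j, ¬ G'.Adj i j)).card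
      = ((Finset.Icc 1 k).filter (fun i => w i = true)).card := by
    apply Finset.card_bij' (fun a _ => partner a) (fun b _ => partner b)
    · intro a ha
      simp only [Finset.mem_filter, Finset.mem_Icc, not_forall, not_not] at ha ⊢
      obtain ⟨⟨h1a, hak⟩, hwa, j, hj⟩ := ha
      have hadj := hpadj a ⟨j, hj⟩
      have hlt := f2 a (partner a) hadj hwa
      have hbnd := hG' a (partner a) hadj
      exact ⟨⟨hbnd.2.2.1, hbnd.2.2.2⟩, f3r a (partner a) hadj hlt⟩
    · intro b hb2
      simp only [Finset.mem_filter, Finset.mem_Icc, not_forall, not_not] at hb2 ⊢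
      obtain ⟨⟨h1b, hbk⟩, hwb⟩ := hb2
      obtain ⟨j, hj, hadj⟩ := f1 b h1b hbk hwb
      have hpb := hpadj b ⟨j, hadj⟩
      have hpe : partner b = j := huniq b (partner b) j hpb hadj
      have hbnd := hG' b (partner b) hpb
      refine ⟨⟨hbnd.2.2.1, hbnd.2.2.2⟩, ?_, b, hpb.symm⟩
      exact f3l (partner b) b hpb.symm (by omega)
    · intro a ha
      simp only [Finset.mem_filter, Finset.mem_Icc, not_forall, not_not] at ha
      obtain ⟨-, -, j, hj⟩ := ha
      have hadj := hpadj a ⟨j, hj⟩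
      exact huniq (partner a) (partner (partner a)) a (hpadj (partner a) ⟨a, hadj.symm⟩) hadj.symm
    · intro b hb2
      simp only [Finset.mem_filter, Finset.mem_Icc] at hb2
      obtain ⟨⟨h1b, hbk⟩, hwb⟩ := hb2
      obtain ⟨j, hj, hadj⟩ := f1 b h1b hbk hwb
      have hpb := hpadj b ⟨j, hadj⟩
      exact huniq (partner b) (partner (partner b)) b (hpadj (partner b) ⟨b, hpb.symm⟩) hpb.symm
  -- main cardinality identity
  have count1 : ∀ x, k ≤ x → x ≤ n →
      (S.filter (fun i => i ≤ x)).card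
        + ((Finset.Icc 1 k).filter (fun i => w i = true)).card
        + ((Finset.Icc 1 x).filter (fun i => w i = true)).card = x := by
    intro x hkx hxn
    have key0 : (S.filter (fun i => i ≤ x))
        = (Finset.Icc 1 x).filter (fun i => w i = false ∧ ∀ j, ¬ G'.Adj i j) := by
      ext a
      simp only [hSdef, Finset.mem_filter, Finset.mem_Icc]
      constructor
      · rintro ⟨⟨⟨ha1, _⟩, hP⟩, hax⟩
        exact ⟨⟨ha1, hax⟩, hP⟩
      · rintro ⟨⟨ha1, hax⟩, hP⟩
        exact ⟨⟨⟨ha1, by omega⟩, hP⟩, hax⟩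
    have split1 : ((Finset.Icc 1 x).filter (fun i => w i = true)).card
        + ((Finset.Icc 1 x).filter (fun i => ¬ (w i = true))).card = x := by
      rw [Finset.card_filter_add_card_filter_not, Nat.card_Icc]
      omega
    have hfalse_eq : (Finset.Icc 1 x).filter (fun i => ¬ (w i = true))
        = (Finset.Icc 1 x).filter (fun i => w i = false) := by
      apply Finset.filter_congr
      intro a _
      simp [Bool.not_eq_true]
    have split2 : ((Finset.Icc 1 x).filter (fun i => w i = false ∧ ∀ j, ¬ G'.Adj i j)).card
        + ((Finset.Icc 1 x).filter (fun i => w i = false ∧ ¬ ∀ j, ¬ G'.Adj i j)).card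
        = ((Finset.Icc 1 x).filter (fun i => w i = false)).card := by
      rw [← Finset.filter_filter, ← Finset.filter_filter]
      exact Finset.card_filter_add_card_filter_not (fun i => ∀ j, ¬ G'.Adj i j)
    have hFM : (Finset.Icc 1 x).filter (fun i => w i = false ∧ ¬ ∀ j, ¬ G'.Adj i j)
        = (Finset.Icc 1 k).filter (fun i => w i = false ∧ ¬ ∀ j, ¬ G'.Adj i j) := by
      ext a
      simp only [Finset.mem_filter, Finset.mem_Icc, not_forall, not_not]
      constructor
      · rintro ⟨⟨h1a, _⟩, hwa, j, hj⟩
        exact ⟨⟨h1a, (hG' a j hj).2.1⟩, hwa, j, hj⟩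
      · rintro ⟨⟨h1a, hak⟩, hwa, j, hj⟩
        exact ⟨⟨h1a, by omega⟩, hwa, j, hj⟩
    rw [key0]
    rw [hfalse_eq] at split1
    rw [hFM] at split2
    omega
  have countR : ∀ x, k ≤ x → x ≤ n →
      (R.filter (fun i => i ≤ x)).card + ((Finset.Icc 1 k).filter (fun i => w i = true)).card
        = ((Finset.Icc 1 x).filter (fun i => w i = true)).card := by
    intro x hkx hxn
    have key0 : (R.filter (fun i => i ≤ x))
        = (Finset.Icc 1 x).filter (fun i => w i = true ∧ k < i) := by
      ext a
      simp only [Finset.mem_filter, Finset.mem_Icc]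
      constructor
      · rintro ⟨haR, hax⟩
        have := (hRmem' a).mp haR
        exact ⟨⟨by omega, hax⟩, this.2.1, this.2.2⟩
      · rintro ⟨⟨h1a, hax⟩, hwa, hka⟩
        exact ⟨(hRmem' a).mpr ⟨by omega, hwa, hka⟩, hax⟩
    have split2 : ((Finset.Icc 1 x).filter (fun i => w i = true ∧ k < i)).card
        + ((Finset.Icc 1 x).filter (fun i => w i = true ∧ ¬ k < i)).card
        = ((Finset.Icc 1 x).filter (fun i => w i = true)).card := by
      rw [← Finset.filter_filter, ← Finset.filter_filter]
      exact Finset.card_filter_add_card_filter_not (fun i => k < i)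
    have hsmall : (Finset.Icc 1 x).filter (fun i => w i = true ∧ ¬ k < i)
        = (Finset.Icc 1 k).filter (fun i => w i = true) := by
      ext a
      simp only [Finset.mem_filter, Finset.mem_Icc, not_lt]
      constructor
      · rintro ⟨⟨h1a, _⟩, hwa, hak⟩
        exact ⟨⟨h1a, hak⟩, hwa⟩
      · rintro ⟨⟨h1a, hak⟩, hwa⟩
        exact ⟨⟨h1a, by omega⟩, hwa, hak⟩
    rw [key0]
    rw [hsmall] at split2
    omega
  have hcards : R.card = S.card := by
    have h1 := count1 n hk (le_refl n)
    have h2 := countR n hk (le_refl n)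
    have h3 : S.filter (fun i => i ≤ n) = S := by
      apply Finset.filter_true_of_mem
      intro x hx; exact ((hSmem x).mp hx).2.1
    have h4 : R.filter (fun i => i ≤ n) = R := by
      apply Finset.filter_true_of_mem
      intro x hx; exact ((hRmem x).mp hx).2.1
    rw [h3] at h1; rw [h4] at h2
    have h5 := hw.1
    omega
  have hC : ∀ r ∈ R, (R.filter (fun x => x ≤ r)).card ≤ (S.filter (fun x => x < r)).card := by
    intro r hr
    have hkr := hRk r hr
    have hrn := ((hRmem r).mp hr).2.1
    have hwr := ((hRmem r).mp hr).2.2.1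
    have h1 := countR r (by omega) hrn
    have hlt : S.filter (fun x => x < r) = S.filter (fun x => x ≤ r - 1) := by
      apply Finset.filter_congr
      intro a _
      constructor <;> intro h <;> omega
    have h2 := count1 (r-1) (by omega) (by omega)
    have h3 : ((Finset.Icc 1 r).filter (fun i => w i = true)).card
        = ((Finset.Icc 1 (r-1)).filter (fun i => w i = true)).card + 1 := by
      have hins : Finset.Icc 1 r = insert r (Finset.Icc 1 (r-1)) := by
        ext a
        simp only [Finset.mem_Icc, Finset.mem_insert]
        omega
      rw [hins, Finset.filter_insert, if_pos hwr,
        Finset.card_insert_of_notMem (by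
          simp only [Finset.mem_filter, Finset.mem_Icc]
          omega)]
    have h4 := hw.2 r hrn
    rw [hlt]
    omega
  set N := S.card with hNdef
  set eS := S.orderIsoOfFin rfl with heSdef
  set eR := R.orderIsoOfFin hcards with heRdef
  have hK : ∀ i : Fin N, (eS i : ℕ) < (eR i : ℕ) := fun i => pairLt S R N rfl hcards hC i
  have hSmemE : ∀ i : Fin N, (eS i : ℕ) ∈ S := fun i => (eS i).2
  have hRmemE : ∀ i : Fin N, (eR i : ℕ) ∈ R := fun i => (eR i).2
  have hSinj : ∀ i j : Fin N, (eS i : ℕ) = (eS j : ℕ) → i = j :=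
    fun i j h => eS.injective (Subtype.coe_injective h)
  have hRinj : ∀ i j : Fin N, (eR i : ℕ) = (eR j : ℕ) → i = j :=
    fun i j h => eR.injective (Subtype.coe_injective h)
  have hSmono : ∀ i j : Fin N, (eS i : ℕ) < (eS j : ℕ) → i < j :=
    fun i j h => eS.lt_iff_lt.mp (Subtype.coe_lt_coe.mp h)
  have hRmono : ∀ i j : Fin N, i < j → (eR i : ℕ) < (eR j : ℕ) :=
    fun i j h => Subtype.coe_lt_coe.mpr (eR.lt_iff_lt.mpr h)
  set G : SimpleGraph ℕ := SimpleGraph.fromRel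
    (fun u v => G'.Adj u v ∨ ∃ i : Fin N, u = (eS i : ℕ) ∧ v = (eR i : ℕ)) with hGdef
  have hGadj : ∀ u v, G.Adj u v ↔ (G'.Adj u v ∨ (∃ i, u = (eS i : ℕ) ∧ v = (eR i : ℕ))
      ∨ (∃ i, u = (eR i : ℕ) ∧ v = (eS i : ℕ))) := by
    intro u v
    rw [hGdef]
    simp only [SimpleGraph.fromRel_adj]
    constructor
    · rintro ⟨hne, (h | ⟨i, h1, h2⟩) | (h | ⟨i, h1, h2⟩)⟩
      · exact Or.inl h
      · exact Or.inr (Or.inl ⟨i, h1, h2⟩)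
      · exact Or.inl h.symm
      · exact Or.inr (Or.inr ⟨i, h2, h1⟩)
    · rintro (h | ⟨i, rfl, rfl⟩ | ⟨i, rfl, rfl⟩)
      · exact ⟨h.ne, Or.inl (Or.inl h)⟩
      · exact ⟨(hK i).ne, Or.inl (Or.inr ⟨i, rfl, rfl⟩)⟩
      · exact ⟨(hK i).ne', Or.inr (Or.inr ⟨i, rfl, rfl⟩)⟩
  have hclass : ∀ u v, G.Adj u v → u < v →
      (G'.Adj u v ∨ ∃ i, u = (eS i : ℕ) ∧ v = (eR i : ℕ)) := by
    intro u v hadj hlt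
    rcases (hGadj u v).mp hadj with h | h | ⟨i, hu, hv⟩
    · exact Or.inl h
    · exact Or.inr h
    · exfalso
      have := hK i
      rw [← hu, ← hv] at this
      omega
  refine ⟨G, ⟨?_, ?_⟩, ?_, ?_, ?_⟩
  · intro u v huv
    rcases (hGadj u v).mp huv with h | ⟨i, rfl, rfl⟩ | ⟨i, rfl, rfl⟩
    · have := hG' u v h
      exact ⟨this.1, by omega, this.2.2.1, by omega⟩
    · have h1 := (hSmem _).mp (hSmemE i)
      have h2 := (hRmem _).mp (hRmemE i)
      exact ⟨h1.1, h1.2.1, h2.1, h2.2.1⟩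
    · have h1 := (hSmem _).mp (hSmemE i)
      have h2 := (hRmem _).mp (hRmemE i)
      exact ⟨h2.1, h2.2.1, h1.1, h1.2.1⟩
  · intro v h1v hvn
    by_cases hmv : ∃ u, G'.Adj v u
    · obtain ⟨u, hu⟩ := hmv
      refine ⟨u, (hGadj v u).mpr (Or.inl hu), ?_⟩
      intro y hy
      rcases (hGadj v y).mp hy with h | ⟨i, hvi, _⟩ | ⟨i, hvi, _⟩
      · exact huniq v y u h hu
      · exact absurd hu (by rw [hvi]; exact fun h2 => ((hSmem _).mp (hSmemE i)).2.2.2 _ h2)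
      · exact absurd hu (by rw [hvi]; exact fun h2 => ((hRmem _).mp (hRmemE i)).2.2.2 _ h2)
    · push_neg at hmv
      cases hwv : w v with
      | true =>
        have hvR : v ∈ R := (hRmem v).mpr ⟨h1v, hvn, hwv, hmv⟩
        set i : Fin N := eR.symm ⟨v, hvR⟩ with hidef
        have hvi : v = (eR i : ℕ) := by rw [hidef, OrderIso.apply_symm_apply]
        refine ⟨(eS i : ℕ), (hGadj v _).mpr (Or.inr (Or.inr ⟨i, hvi, rfl⟩)), ?_⟩
        intro y hy
        rcases (hGadj v y).mp hy with h | ⟨j, hvj, hyj⟩ | ⟨j, hvj, hyj⟩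
        · exact absurd h (hmv y)
        · have := ((hSmem _).mp (hSmemE j)).2.2.1
          rw [← hvj, hwv] at this
          exact absurd this (by simp)
        · have : j = i := hRinj j i (by rw [← hvj, hvi])
          rw [hyj, this]
      | false =>
        have hvS : v ∈ S := (hSmem v).mpr ⟨h1v, hvn, hwv, hmv⟩
        set i : Fin N := eS.symm ⟨v, hvS⟩ with hidef
        have hvi : v = (eS i : ℕ) := by rw [hidef, OrderIso.apply_symm_apply]
        refine ⟨(eR i : ℕ), (hGadj v _).mpr (Or.inr (Or.inl ⟨i, hvi, rfl⟩)), ?_⟩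
        intro y hy
        rcases (hGadj v y).mp hy with h | ⟨j, hvj, hyj⟩ | ⟨j, hvj, hyj⟩
        · exact absurd h (hmv y)
        · have : j = i := hSinj j i (by rw [← hvj, hvi])
          rw [hyj, this]
        · have := ((hRmem _).mp (hRmemE j)).2.2.1
          rw [← hvj, hwv] at this
          exact absurd this (by simp)
  · intro i h1i hin
    constructor
    · intro hwi
      by_cases hik : i ≤ k
      · obtain ⟨j, hj, hadj⟩ := f1 i h1i hik hwi
        exact ⟨j, hj, (hGadj i j).mpr (Or.inl hadj)⟩
      · push_neg at hik
        have hiR : i ∈ R := (hRmem' i).mpr ⟨hin, hwi, hik⟩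
        set a : Fin N := eR.symm ⟨i, hiR⟩ with hadef
        have hia : i = (eR a : ℕ) := by rw [hadef, OrderIso.apply_symm_apply]
        refine ⟨(eS a : ℕ), by rw [hia]; exact hK a, ?_⟩
        exact (hGadj i _).mpr (Or.inr (Or.inr ⟨a, hia, rfl⟩))
    · rintro ⟨j, hj, hadj⟩
      rcases (hGadj i j).mp hadj with h | ⟨a, hia, hja⟩ | ⟨a, hia, _⟩
      · exact (hG0b i h1i hin).mpr ⟨j, hj, hG'G0 i j h⟩
      · have := hK a
        rw [← hia, ← hja] at this
        omega
      · rw [hia]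
        exact ((hRmem _).mp (hRmemE a)).2.2.1
  · rintro ⟨f, hf, hpat⟩
    have e14 : G.Adj (f 1) (f 4) := hpat 1 4 M132_adjs.1
    have e26 : G.Adj (f 2) (f 6) := hpat 2 6 M132_adjs.2.1
    have e35 : G.Adj (f 3) (f 5) := hpat 3 5 M132_adjs.2.2
    have h12 : f 1 < f 2 := hf (by norm_num)
    have h23 : f 2 < f 3 := hf (by norm_num)
    have h34 : f 3 < f 4 := hf (by norm_num)
    have h45 : f 4 < f 5 := hf (by norm_num)
    have h56 : f 5 < f 6 := hf (by norm_num)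
    by_cases h5k : f 5 ≤ k
    · have hC35 : G'.Adj (f 3) (f 5) := by
        rcases hclass _ _ e35 (h34.trans h45) with h | ⟨i, _, h5i⟩
        · exact h
        · exfalso
          have := hRk _ (hRmemE i)
          rw [← h5i] at this
          omega
      have hA14 : G'.Adj (f 1) (f 4) := by
        rcases hclass _ _ e14 (h12.trans (h23.trans h34)) with h | ⟨i, _, h4i⟩
        · exact h
        · exfalso
          have := hRk _ (hRmemE i)
          rw [← h4i] at this
          omega
      rcases hclass _ _ e26 (h23.trans (h34.trans (h45.trans h56))) with h | ⟨i, h2i, _⟩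
      · apply hb
        refine ⟨f, hf, ?_⟩
        intro u v huv
        rcases M132_adj_cases u v huv with ⟨rfl,rfl⟩|⟨rfl,rfl⟩|⟨rfl,rfl⟩|⟨rfl,rfl⟩|⟨rfl,rfl⟩|⟨rfl,rfl⟩
        exacts [hA14, hA14.symm, h, h.symm, hC35, hC35.symm]
      · apply hc
        have hS2 := (hSmem _).mp (hSmemE i)
        rw [← h2i] at hS2
        have h3k : f 3 ≤ k := (hG' _ _ hC35).2.1
        exact ⟨f 1, f 2, f 3, f 4, f 5, h12, h23, h34, h45,
          ⟨hS2.1, by omega, hS2.2.2.2⟩, hA14, hC35⟩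
    · push_neg at h5k
      rcases hclass _ _ e35 (h34.trans h45) with h | ⟨i, h3i, h5i⟩
      · have := (hG' _ _ h).2.2.2
        omega
      · rcases hclass _ _ e26 (h23.trans (h34.trans (h45.trans h56))) with h | ⟨j, h2j, h6j⟩
        · have := (hG' _ _ h).2.2.2
          omega
        · have hji : j < i := hSmono j i (by rw [← h2j, ← h3i]; exact h23)
          have := hRmono j i hji
          rw [← h6j, ← h5i] at this
          omega
  · ext u v
    rw [restrict_adj]
    constructor
    · rintro ⟨hadj, hu, hv⟩
      rcases (hGadj u v).mp hadj with h | ⟨i, _, hvi⟩ | ⟨i, hui, _⟩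
      · exact h
      · exfalso
        have := hRk _ (hRmemE i)
        rw [← hvi] at this
        omega
      · exfalso
        have := hRk _ (hRmemE i)
        rw [← hui] at this
        omega
    · intro h
      exact ⟨(hGadj u v).mpr (Or.inl h), (hG' u v h).2.1, (hG' u v h).2.2.2⟩

/-- a graph `G'` on `[k]` is of the form `G[k]` for some matching `G` on `[2m]`
with base `w` avoiding `M_132` iff (a) `G'` is consistent with `w`, (b) `G'` avoids `M_132`,
and (c) there are no five vertices `x₁<x₂<x₃<x₄<x₅` with `x₂` a stub and
`{x₁,x₄}, {x₃,x₅}` edges of `G'`. -/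
theorem stmt6 (m k : ℕ) (hm : 0 < m) (w : ℕ → Bool) (hw : IsDyckWord (2*m) w)
    (hk1 : 1 ≤ k) (hk : k ≤ 2*m) (G' : SimpleGraph ℕ)
    (hG' : ∀ u v : ℕ, G'.Adj u v → 1 ≤ u ∧ u ≤ k ∧ 1 ≤ v ∧ v ≤ k) :
    (∃ G : SimpleGraph ℕ, IsMatchingOn (2*m) G ∧ HasBase (2*m) G w ∧
        ¬ ContainsPat G M132 ∧ restrictG G k = G') ↔
      ((∃ G : SimpleGraph ℕ, IsMatchingOn (2*m) G ∧ HasBase (2*m) G w ∧ restrictG G k = G') ∧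
       (¬ ContainsPat G' M132) ∧
       (¬ ∃ x1 x2 x3 x4 x5 : ℕ, x1 < x2 ∧ x2 < x3 ∧ x3 < x4 ∧ x4 < x5 ∧
          IsStubOn k G' x2 ∧ G'.Adj x1 x4 ∧ G'.Adj x3 x5)) := by
  constructor
  · rintro ⟨G, hGm, hGb, hGav, hGr⟩
    exact ⟨⟨G, hGm, hGb, hGr⟩, fwd m k hm w hk1 hk G' hG' G hGm hGav hGr⟩
  · rintro ⟨⟨G0, hG0m, hG0b, hG0r⟩, hb, hc⟩
    exact bwd m k hm w hw hk1 hk G' G0 hG' hG0m hG0b hG0r hb hc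
end

section
/- Let G' be a graph on the vertex set [k] with maximum degree at most one such that there is no sequence of five vertices x_1 < x_2 < x_3 < x_4 < x_5 with x_2 a stub of G' and {x_1,x_4}, {x_3,x_5} edges of G'. Define a relation ∼ on the stubs of G' by: u ∼ v if and only if u = v or there is an edge {x,y} of G' with x < u < y and x < v < y. Then ∼ is an equivalence relation on the set of stubs of G', and its blocks are contiguous: if x < y < z are stubs of G' and x ∼ z, then x ∼ y and y ∼ z. -/
/-- on a graph `G` on `[k]` with maximum degree at most one and with no
configuration `x₁<x₂<x₃<x₄<x₅` where `x₂` is a stub and `{x₁,x₄}, {x₃,x₅}` are edges,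
the relation `∼` is an equivalence relation on the stubs, with contiguous blocks. -/
theorem stmt8 (k : ℕ) (G : SimpleGraph ℕ)
    (hv : ∀ u v : ℕ, G.Adj u v → 1 ≤ u ∧ u ≤ k ∧ 1 ≤ v ∧ v ≤ k)
    (hdeg : ∀ v u u' : ℕ, G.Adj v u → G.Adj v u' → u = u')
    (hno : ¬ ∃ x1 x2 x3 x4 x5 : ℕ, x1 < x2 ∧ x2 < x3 ∧ x3 < x4 ∧ x4 < x5 ∧
      IsStubOn k G x2 ∧ G.Adj x1 x4 ∧ G.Adj x3 x5) :
    (∀ u : ℕ, IsStubOn k G u → SimRel G u u) ∧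
    (∀ u v : ℕ, IsStubOn k G u → IsStubOn k G v → SimRel G u v → SimRel G v u) ∧
    (∀ u v t : ℕ, IsStubOn k G u → IsStubOn k G v → IsStubOn k G t →
      SimRel G u v → SimRel G v t → SimRel G u t) ∧
    (∀ x y z : ℕ, IsStubOn k G x → IsStubOn k G y → IsStubOn k G z →
      x < y → y < z → SimRel G x z → SimRel G x y ∧ SimRel G y z) := by
  refine ⟨fun u _ => Or.inl rfl, ?_, ?_, ?_⟩
  · rintro u v _ _ (rfl | ⟨x, y, adj, h1, h2, h3, h4⟩)
    · exact Or.inl rfl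
    · exact Or.inr ⟨x, y, adj, h3, h4, h1, h2⟩
  · rintro u v t hu hv ht (rfl | ⟨x, y, adj, hxu, huy, hxv, hvy⟩) h2
    · exact h2
    rcases h2 with rfl | ⟨x', y', adj', hxv', hvy', hxt', hty'⟩
    · exact Or.inr ⟨x, y, adj, hxu, huy, hxv, hvy⟩
    rcases lt_trichotomy x x' with hxx | rfl | hxx
    · rcases lt_trichotomy y y' with hyy | rfl | hyy
      · -- cross x < x' < y < y'; show x' < u
        have hux' : x' < u := by
          rcases lt_trichotomy u x' with h | rfl | h
          · exact absurd ⟨x, u, x', y, y', hxu, h, hxv'.trans hvy, hyy, hu, adj, adj'⟩ hno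
          · exact absurd adj' (hu.2.2 y')
          · exact h
        exact Or.inr ⟨x', y', adj', hux', (huy.trans hyy), hxt', hty'⟩
      · exact absurd (hdeg y x x' adj.symm adj'.symm) (ne_of_lt hxx)
      · -- nested x < x' < y' < y
        exact Or.inr ⟨x, y, adj, hxu, huy, hxx.trans hxt', hty'.trans hyy⟩
    · have := hdeg x y y' adj adj'
      subst this
      exact Or.inr ⟨x, y, adj, hxu, huy, hxt', hty'⟩
    · rcases lt_trichotomy y y' with hyy | rfl | hyy
      · -- nested x' < x < y < y'
        exact Or.inr ⟨x', y', adj', hxx.trans hxu, huy.trans hyy, hxt', hty'⟩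
      · exact absurd (hdeg y x' x adj'.symm adj.symm) (ne_of_lt hxx)
      · -- cross x' < x < y' < y; show x < t
        have hxt : x < t := by
          rcases lt_trichotomy t x with h | rfl | h
          · exact absurd ⟨x', t, x, y', y, hxt', h, hxv.trans hvy', hyy, ht, adj', adj⟩ hno
          · exact absurd adj (ht.2.2 y)
          · exact h
        exact Or.inr ⟨x, y, adj, hxu, huy, hxt, hty'.trans hyy⟩
  · rintro a b c _ _ _ hab hbc (rfl | ⟨x, y, adj, h1, h2, h3, h4⟩)
    · exact absurd rfl (ne_of_lt (hab.trans hbc))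
    · exact ⟨Or.inr ⟨x, y, adj, h1, h2, h1.trans hab, hbc.trans h4⟩,
        Or.inr ⟨x, y, adj, h1.trans hab, hbc.trans h4, h3, h4⟩⟩
end

section
/- Let H' be a graph on the vertex set [k] with maximum degree at most one. Define a relation ≈ on the stubs of H' by: u ≈ v if and only if u = v or there exists a sequence of edges e_1, e_2, ..., e_p of H' (p ≥ 1), with e_i = {x_i, y_i} and x_i < y_i, such that e_i crosses e_{i+1} for each i < p, and moreover x_1 < u < y_1 and x_p < v < y_p. Then ≈ is an equivalence relation on the set of stubs of H', and its blocks are contiguous: if x < y < z are stubs of H' and x ≈ z, then x ≈ y and y ≈ z. -/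
lemma cross_symm' {a b c d : ℕ} (h : EdgesCross a b c d) : EdgesCross c d a b := by
  unfold EdgesCross at *; omega

lemma crossNested' {a b a' b' c' d' : ℕ} (h1 : a ≤ a') (h2 : b' ≤ b)
    (hx : EdgesCross a' b' c' d') (hn : ¬ (a ≤ c' ∧ d' ≤ b)) :
    EdgesCross a b c' d' := by
  unfold EdgesCross at *; omega

lemma glue' (G : SimpleGraph ℕ) {u t p q : ℕ} (hp : 1 ≤ p) (hq : 1 ≤ q)
    {x1 y1 x2 y2 : ℕ → ℕ}
    (e1 : ∀ i, i < p → x1 i < y1 i ∧ G.Adj (x1 i) (y1 i))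
    (c1 : ∀ i, i + 1 < p → EdgesCross (x1 i) (y1 i) (x1 (i+1)) (y1 (i+1)))
    (e2 : ∀ i, i < q → x2 i < y2 i ∧ G.Adj (x2 i) (y2 i))
    (c2 : ∀ i, i + 1 < q → EdgesCross (x2 i) (y2 i) (x2 (i+1)) (y2 (i+1)))
    (hu1 : x1 0 < u) (hu2 : u < y1 0) (ht1 : x2 (q-1) < t) (ht2 : t < y2 (q-1))
    (hx : EdgesCross (x1 (p-1)) (y1 (p-1)) (x2 0) (y2 0)) :
    ApproxRel G u t := by
  right
  refine ⟨p + q, by omega, (fun i => if i < p then x1 i else x2 (i - p)),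
     (fun i => if i < p then y1 i else y2 (i - p)), ?_, ?_, ?_, ?_, ?_, ?_⟩
  · intro i hi
    by_cases h : i < p
    · simp only [if_pos h]; exact e1 i h
    · simp only [if_neg h]; exact e2 (i - p) (by omega)
  · intro i hi
    by_cases h : i + 1 < p
    · simp only [if_pos h, if_pos (by omega : i < p)]; exact c1 i h
    · by_cases h2 : i < p
      · simp only [if_pos h2, if_neg h]
        have h3 : i + 1 - p = 0 := by omega
        have h4 : i = p - 1 := by omega
        rw [h3, h4]; exact hx
      · simp only [if_neg h, if_neg h2]
        have h3 : i + 1 - p = (i - p) + 1 := by omega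
        rw [h3]; exact c2 (i - p) (by omega)
  · simp only [if_pos (by omega : 0 < p)]; exact hu1
  · simp only [if_pos (by omega : 0 < p)]; exact hu2
  · have h : ¬ (p + q - 1 < p) := by omega
    simp only [if_neg h]
    have h3 : p + q - 1 - p = q - 1 := by omega
    rw [h3]; exact ht1
  · have h : ¬ (p + q - 1 < p) := by omega
    simp only [if_neg h]
    have h3 : p + q - 1 - p = q - 1 := by omega
    rw [h3]; exact ht2

lemma interval_lemma' (x y : ℕ → ℕ) (p : ℕ)
    (e : ∀ i, i < p → x i < y i)
    (c : ∀ i, i + 1 < p → EdgesCross (x i) (y i) (x (i+1)) (y (i+1))) :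
    ∀ i, i < p → ∃ m M, m ≤ x i ∧ y i ≤ M ∧
      ∀ n, (m < n ∧ n < M) ↔ ∃ j ≤ i, x j < n ∧ n < y j := by
  intro i
  induction i with
  | zero =>
    intro _
    refine ⟨x 0, y 0, le_refl _, le_refl _, fun n => ⟨fun h => ⟨0, le_refl _, h⟩, ?_⟩⟩
    rintro ⟨j, hj, h1, h2⟩
    have : j = 0 := by omega
    subst this; exact ⟨h1, h2⟩
  | succ i ih =>
    intro hi
    obtain ⟨m, M, hm, hM, hiff⟩ := ih (by omega)
    have hc := c i (by omega)
    have he := e (i+1) hi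
    refine ⟨min m (x (i+1)), max M (y (i+1)), by omega, by omega, fun n => ⟨?_, ?_⟩⟩
    · intro hn
      by_cases h : m < n ∧ n < M
      · obtain ⟨j, hj, hjn⟩ := (hiff n).mp h
        exact ⟨j, by omega, hjn⟩
      · refine ⟨i+1, le_refl _, ?_⟩
        unfold EdgesCross at hc
        omega
    · rintro ⟨j, hj, h1, h2⟩
      by_cases h : j ≤ i
      · have := (hiff n).mpr ⟨j, h, h1, h2⟩
        omega
      · have : j = i + 1 := by omega
        subst this; omega

lemma edge_rel' (G : SimpleGraph ℕ)
    (hdeg : ∀ v u u' : ℕ, G.Adj v u → G.Adj v u' → u = u')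
    {a b c d v : ℕ} (hab : G.Adj a b) (hcd : G.Adj c d)
    (h1 : a < v) (h2 : v < b) (h3 : c < v) (h4 : v < d) :
    (a = c ∧ b = d) ∨ EdgesCross a b c d ∨ (a < c ∧ d < b) ∨ (c < a ∧ b < d) := by
  by_cases hac : a = c
  · subst hac
    exact Or.inl ⟨rfl, hdeg a b d hab hcd⟩
  · have hbd : b ≠ d := by
      intro hbd; subst hbd
      exact hac (hdeg b a c hab.symm hcd.symm)
    right
    unfold EdgesCross
    omega

lemma trans_main' (G : SimpleGraph ℕ)
    (hdeg : ∀ v u u' : ℕ, G.Adj v u → G.Adj v u' → u = u')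
    {u v t : ℕ} (huv : ApproxRel G u v) (hvt : ApproxRel G v t) :
    ApproxRel G u t := by
  rcases huv with rfl | ⟨p, hp, x1, y1, e1, c1, hu1, hu2, hv1, hv2⟩
  · exact hvt
  rcases hvt with rfl | ⟨q, hq, x2, y2, e2, c2, hv1', hv2', ht1, ht2⟩
  · exact Or.inr ⟨p, hp, x1, y1, e1, c1, hu1, hu2, hv1, hv2⟩
  -- Case A: last edge of chain1 spans t
  by_cases hA : x1 (p-1) < t ∧ t < y1 (p-1)
  · exact Or.inr ⟨p, hp, x1, y1, e1, c1, hu1, hu2, hA.1, hA.2⟩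
  -- Case B: first edge of chain2 spans u
  by_cases hB : x2 0 < u ∧ u < y2 0
  · exact Or.inr ⟨q, hq, x2, y2, e2, c2, hB.1, hB.2, ht1, ht2⟩
  have hab := e1 (p-1) (by omega)
  have hcd := e2 0 (by omega)
  rcases edge_rel' G hdeg hab.2 hcd.2 hv1 hv2 hv1' hv2' with heq | hcr | hn1 | hn2
  · -- equal edges
    have hq2 : 2 ≤ q := by
      by_contra h
      have h1 : q = 1 := by omega
      rw [h1] at ht1 ht2
      simp only [Nat.sub_self] at ht1 ht2
      exact hA (by omega)
    refine glue' G hp (by omega : 1 ≤ q - 1) e1 c1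
      (x2 := fun i => x2 (1 + i)) (y2 := fun i => y2 (1 + i))
      (fun i hi => e2 (1 + i) (by omega))
      (fun i hi => c2 (1 + i) (by omega)) hu1 hu2 ?_ ?_ ?_
    · show x2 (1 + (q - 1 - 1)) < t
      have h3 : 1 + (q - 1 - 1) = q - 1 := by omega
      rw [h3]; exact ht1
    · show t < y2 (1 + (q - 1 - 1))
      have h3 : 1 + (q - 1 - 1) = q - 1 := by omega
      rw [h3]; exact ht2
    · rw [heq.1, heq.2]
      exact c2 0 (by omega)
  · -- crossing: direct glue
    exact glue' G hp hq e1 c1 e2 c2 hu1 hu2 ht1 ht2 hcr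
  · -- first edge of chain2 nested in last edge of chain1
    set a := x1 (p-1) with ha
    set b := y1 (p-1) with hb
    have hdec : DecidablePred (fun i => ¬ (a ≤ x2 i ∧ y2 i ≤ b)) := fun i => by
      exact instDecidableNot
    have hex : ∃ i, ¬ (a ≤ x2 i ∧ y2 i ≤ b) := ⟨q - 1, by omega⟩
    have hspec := Nat.find_spec hex
    set i0 := Nat.find hex with hi0
    have hle : i0 ≤ q - 1 := Nat.find_min' hex (by omega)
    have h0 : ¬ ¬ (a ≤ x2 0 ∧ y2 0 ≤ b) := by
      intro h; exact h ⟨by omega, by omega⟩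
    have hpos : 1 ≤ i0 := by
      rcases Nat.eq_zero_or_pos i0 with h | h
      · rw [h] at hspec; exact absurd hspec h0
      · omega
    have hprev : a ≤ x2 (i0 - 1) ∧ y2 (i0 - 1) ≤ b :=
      of_not_not (Nat.find_min hex (by omega))
    have hcrp := c2 (i0 - 1) (by omega)
    have h3 : i0 - 1 + 1 = i0 := by omega
    rw [h3] at hcrp
    have hjunc : EdgesCross a b (x2 i0) (y2 i0) :=
      crossNested' hprev.1 hprev.2 hcrp hspec
    refine glue' G hp (by omega : 1 ≤ q - i0) e1 c1
      (x2 := fun i => x2 (i0 + i)) (y2 := fun i => y2 (i0 + i))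
      (fun i hi => e2 (i0 + i) (by omega))
      (fun i hi => c2 (i0 + i) (by omega)) hu1 hu2 ?_ ?_ ?_
    · show x2 (i0 + (q - i0 - 1)) < t
      have h4 : i0 + (q - i0 - 1) = q - 1 := by omega
      rw [h4]; exact ht1
    · show t < y2 (i0 + (q - i0 - 1))
      have h4 : i0 + (q - i0 - 1) = q - 1 := by omega
      rw [h4]; exact ht2
    · exact hjunc
  · -- last edge of chain1 nested in first edge of chain2
    set c := x2 0 with hc
    set d := y2 0 with hd
    have hex : ∃ i, (c ≤ x1 i ∧ y1 i ≤ d) := ⟨p - 1, by omega, by omega⟩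
    have hspec := Nat.find_spec hex
    set j0 := Nat.find hex with hj0
    have hle : j0 ≤ p - 1 := Nat.find_min' hex ⟨by omega, by omega⟩
    have h0 : ¬ (c ≤ x1 0 ∧ y1 0 ≤ d) := by
      intro h
      have := e1 0 (by omega)
      exact hB ⟨by omega, by omega⟩
    have hpos : 1 ≤ j0 := by
      rcases Nat.eq_zero_or_pos j0 with h | h
      · rw [h] at hspec; exact absurd hspec h0
      · omega
    have hprevn : ¬ (c ≤ x1 (j0 - 1) ∧ y1 (j0 - 1) ≤ d) :=
      Nat.find_min hex (by omega)
    have hcrp := c1 (j0 - 1) (by omega)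
    have h3 : j0 - 1 + 1 = j0 := by omega
    rw [h3] at hcrp
    have hjunc : EdgesCross c d (x1 (j0 - 1)) (y1 (j0 - 1)) :=
      crossNested' hspec.1 hspec.2 (cross_symm' hcrp) hprevn
    refine glue' G (by omega : 1 ≤ j0) hq
      (x1 := x1) (y1 := y1) (x2 := x2) (y2 := y2)
      (fun i hi => e1 i (by omega))
      (fun i hi => c1 i (by omega)) e2 c2 hu1 hu2 ht1 ht2 ?_
    exact cross_symm' hjunc


/-- on a graph `H` on `[k]` with maximum degree at most one, the relation `≈`
is an equivalence relation on the stubs, with contiguous blocks. -/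
theorem stmt9 (k : ℕ) (H : SimpleGraph ℕ)
    (hv : ∀ u v : ℕ, H.Adj u v → 1 ≤ u ∧ u ≤ k ∧ 1 ≤ v ∧ v ≤ k)
    (hdeg : ∀ v u u' : ℕ, H.Adj v u → H.Adj v u' → u = u') :
    (∀ u : ℕ, IsStubOn k H u → ApproxRel H u u) ∧
    (∀ u v : ℕ, IsStubOn k H u → IsStubOn k H v → ApproxRel H u v → ApproxRel H v u) ∧
    (∀ u v t : ℕ, IsStubOn k H u → IsStubOn k H v → IsStubOn k H t →
      ApproxRel H u v → ApproxRel H v t → ApproxRel H u t) ∧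
    (∀ x y z : ℕ, IsStubOn k H x → IsStubOn k H y → IsStubOn k H z →
      x < y → y < z → ApproxRel H x z → ApproxRel H x y ∧ ApproxRel H y z) := by
  refine ⟨fun u _ => Or.inl rfl, ?_, ?_, ?_⟩
  · intro u v _ _ h
    rcases h with rfl | ⟨p, hp, x, y, he, hc, h1, h2, h3, h4⟩
    · exact Or.inl rfl
    · right
      refine ⟨p, hp, fun i => x (p-1-i), fun i => y (p-1-i), ?_, ?_, ?_, ?_, ?_, ?_⟩
      · intro i hi; exact he (p-1-i) (by omega)
      · intro i hi
        have h' := hc (p-1-(i+1)) (by omega)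
        have heq : p-1-(i+1)+1 = p-1-i := by omega
        rw [heq] at h'
        exact cross_symm' h'
      · exact h3
      · exact h4
      · show x (p-1-(p-1)) < u
        have heq : p-1-(p-1) = 0 := by omega
        rw [heq]; exact h1
      · show u < y (p-1-(p-1))
        have heq : p-1-(p-1) = 0 := by omega
        rw [heq]; exact h2
  · intro u v t _ _ _ h1 h2
    exact trans_main' H hdeg h1 h2
  · intro va vb vc _ _ _ hab hbc hac
    rcases hac with heq | ⟨p, hp, x, y, he, hc, h1, h2, h3, h4⟩
    · omega
    obtain ⟨m, M, hm, hM, hiff⟩ :=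
      interval_lemma' x y p (fun i hi => (he i hi).1) hc (p-1) (by omega)
    have hxm := (hiff va).mpr ⟨0, by omega, h1, h2⟩
    have hzm := (hiff vc).mpr ⟨p-1, le_refl _, h3, h4⟩
    obtain ⟨j, hj, hb1, hb2⟩ := (hiff vb).mp ⟨by omega, by omega⟩
    constructor
    · right
      exact ⟨j+1, by omega, x, y, fun i hi => he i (by omega),
        fun i hi => hc i (by omega), h1, h2, hb1, hb2⟩
    · right
      refine ⟨p-j, by omega, fun i => x (j+i), fun i => y (j+i),
        fun i hi => he (j+i) (by omega), fun i hi => hc (j+i) (by omega),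
        hb1, hb2, ?_, ?_⟩
      · show x (j+(p-j-1)) < vc
        have heq : j+(p-j-1) = p-1 := by omega
        rw [heq]; exact h3
      · show vc < y (j+(p-j-1))
        have heq : j+(p-j-1) = p-1 := by omega
        rw [heq]; exact h4
end

section
/- Fix a positive integer m, a Dyck word w of length 2m, and k < 2m with w_{k+1} = 1. Let G' be a graph on [k] such that G' = G[k] for some matching G on [2m] with base w avoiding M_132. Then for every stub x of G' that is the minimum of its ∼-block, there exists a matching H on [2m] with base w avoiding M_132 such that H[k] = G' and {x, k+1} is an edge of H. Consequently, the number of distinct graphs of the form G[k+1], where G ranges over matchings on [2m] with base w avoiding M_132 and satisfying G[k] = G', equals the number of ∼-blocks of G'. -/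
lemma adj_restrict {G : SimpleGraph ℕ} {k u v : ℕ} :
    (restrictG G k).Adj u v ↔ G.Adj u v ∧ u ≤ k ∧ v ≤ k := by
  unfold restrictG
  rw [SimpleGraph.fromRel_adj]
  constructor
  · rintro ⟨hne, h | h⟩
    · exact ⟨h.1, h.2⟩
    · exact ⟨h.1.symm, h.2.2, h.2.1⟩
  · rintro ⟨h, hu, hv⟩
    exact ⟨h.ne, Or.inl ⟨h, hu, hv⟩⟩

def patFun (a1 a2 a3 b1 b3 b2 : ℕ) : ℕ → ℕ
  | 0 => 0
  | 1 => a1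
  | 2 => a2
  | 3 => a3
  | 4 => b1
  | 5 => b3
  | 6 => b2
  | (n+7) => b2 + n + 1

lemma pattern_contains {G : SimpleGraph ℕ} {a1 a2 a3 b1 b3 b2 : ℕ}
    (h0 : 0 < a1) (h12 : a1 < a2) (h23 : a2 < a3) (h31 : a3 < b1) (h13 : b1 < b3)
    (h32 : b3 < b2) (e1 : G.Adj a1 b1) (e2 : G.Adj a2 b2) (e3 : G.Adj a3 b3) :
    ContainsPat G M132 := by
  refine ⟨patFun a1 a2 a3 b1 b3 b2, ?_, ?_⟩
  · apply strictMono_nat_of_lt_succ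
    intro n
    rcases n with _|_|_|_|_|_|_|n <;> simp [patFun] <;> omega
  · intro u v huv
    unfold M132 at huv
    rw [SimpleGraph.fromRel_adj] at huv
    obtain ⟨hne, h | h⟩ := huv <;> simp only [List.mem_cons, List.mem_singleton,
      Prod.mk.injEq, List.not_mem_nil, or_false] at h <;>
      rcases h with ⟨hu, hv⟩ | ⟨hu, hv⟩ | ⟨hu, hv⟩ <;> subst hu <;> subst hv <;> simp only [patFun] <;>
        first
          | exact e1 | exact e2 | exact e3 | exact e1.symm | exact e2.symm | exact e3.symm

lemma contains_pattern {G : SimpleGraph ℕ} (h : ContainsPat G M132) :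
    ∃ a1 a2 a3 b1 b3 b2 : ℕ, a1 < a2 ∧ a2 < a3 ∧ a3 < b1 ∧ b1 < b3 ∧ b3 < b2 ∧
      G.Adj a1 b1 ∧ G.Adj a2 b2 ∧ G.Adj a3 b3 := by
  obtain ⟨f, hf, hedge⟩ := h
  have h14 : M132.Adj 1 4 := by unfold M132; rw [SimpleGraph.fromRel_adj]; simp
  have h26 : M132.Adj 2 6 := by unfold M132; rw [SimpleGraph.fromRel_adj]; simp
  have h35 : M132.Adj 3 5 := by unfold M132; rw [SimpleGraph.fromRel_adj]; simp
  exact ⟨f 1, f 2, f 3, f 4, f 5, f 6, hf (by norm_num), hf (by norm_num), hf (by norm_num),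
    hf (by norm_num), hf (by norm_num), hedge _ _ h14, hedge _ _ h26, hedge _ _ h35⟩

lemma orderPairing (L R : Finset ℕ) (hcard : L.card = R.card)
    (hrank : ∀ r ∈ R, (R.filter (· ≤ r)).card ≤ (L.filter (· < r)).card) :
    ∃ σ : ℕ → ℕ, (∀ u ∈ L, σ u ∈ R ∧ u < σ u) ∧
      (∀ u ∈ L, ∀ v ∈ L, u < v → σ u < σ v) ∧
      (∀ r ∈ R, ∃ u ∈ L, σ u = r) := by
  classical
  set n := L.card with hn
  have e := L.orderIsoOfFin rfl
  have f := R.orderIsoOfFin hcard.symm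
  set σ : ℕ → ℕ := fun u => if h : u ∈ L then (f (e.symm ⟨u, h⟩) : ℕ) else 0 with hσ
  have hmem : ∀ u (h : u ∈ L), σ u ∈ R := by
    intro u h
    simp only [hσ, dif_pos h]
    exact (f (e.symm ⟨u, h⟩)).2
  have hmono : ∀ u ∈ L, ∀ v ∈ L, u < v → σ u < σ v := by
    intro u hu v hv huv
    simp only [hσ, dif_pos hu, dif_pos hv]
    have : (⟨u, hu⟩ : L) < ⟨v, hv⟩ := huv
    have h2 : e.symm ⟨u, hu⟩ < e.symm ⟨v, hv⟩ := e.symm.lt_iff_lt.mpr this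
    have := f.lt_iff_lt.2 h2
    exact this
  have hsurj : ∀ r ∈ R, ∃ u ∈ L, σ u = r := by
    intro r hr
    refine ⟨(e (f.symm ⟨r, hr⟩) : ℕ), (e (f.symm ⟨r, hr⟩)).2, ?_⟩
    simp only [hσ, dif_pos (e (f.symm ⟨r, hr⟩)).2]
    congr 1
    rw [show (⟨(e (f.symm ⟨r, hr⟩) : ℕ), _⟩ : L) = e (f.symm ⟨r, hr⟩) from rfl,
      e.symm_apply_apply, f.apply_symm_apply]
  refine ⟨σ, ?_, hmono, hsurj⟩
  intro u hu
  refine ⟨hmem u hu, ?_⟩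
  by_contra hle
  push_neg at hle
  set r := σ u with hr
  have hrR : r ∈ R := hmem u hu
  have hcardeq : (R.filter (· ≤ r)).card = (L.filter (· ≤ u)).card := by
    refine (Finset.card_bij (fun a _ => σ a) ?_ ?_ ?_).symm
    · intro a ha
      simp only [Finset.mem_filter] at ha ⊢
      refine ⟨hmem a ha.1, ?_⟩
      rcases lt_or_eq_of_le ha.2 with h | h
      · exact le_of_lt (hmono a ha.1 u hu h)
      · subst h; exact le_refl _
    · intro a ha b hb hab
      simp only [Finset.mem_filter] at ha hb
      by_contra hne
      rcases lt_or_gt_of_ne hne with h | h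
      · exact absurd hab (ne_of_lt (hmono a ha.1 b hb.1 h))
      · exact absurd hab.symm (ne_of_lt (hmono b hb.1 a ha.1 h))
    · intro s hs
      simp only [Finset.mem_filter] at hs
      obtain ⟨v, hv, hvs⟩ := hsurj s hs.1
      refine ⟨v, ?_, hvs⟩
      simp only [Finset.mem_filter]
      refine ⟨hv, ?_⟩
      by_contra hvu
      push_neg at hvu
      have := hmono u hu v hv hvu
      rw [hvs] at this
      omega
  have hsub : (L.filter (· < r)) ⊆ (L.filter (· ≤ u)).erase u := by
    intro v hv
    simp only [Finset.mem_filter] at hv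
    simp only [Finset.mem_erase, Finset.mem_filter]
    have h1 := hv.2
    refine ⟨by omega, hv.1, by omega⟩
  have h1 : u ∈ L.filter (· ≤ u) := by simp [hu]
  have := Finset.card_le_card hsub
  rw [Finset.card_erase_of_mem h1] at this
  have h2 := hrank r hrR
  have h3 : 1 ≤ (L.filter (· ≤ u)).card := Finset.card_pos.2 ⟨u, h1⟩
  omega

lemma extend_lemma (m k : ℕ) (w : ℕ → Bool) (hk : k < 2*m) (hwk : w (k+1) = true)
    (G : SimpleGraph ℕ) (hGm : IsMatchingOn (2*m) G) (hGb : HasBase (2*m) G w)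
    (hGa : ¬ ContainsPat G M132) (x : ℕ) (hx : IsStubOn k (restrictG G k) x)
    (hxmin : ∀ y : ℕ, IsStubOn k (restrictG G k) y → SimRel (restrictG G k) x y → x ≤ y) :
    ∃ H : SimpleGraph ℕ, IsMatchingOn (2*m) H ∧ HasBase (2*m) H w ∧ ¬ ContainsPat H M132 ∧
      restrictG H k = restrictG G k ∧ H.Adj x (k+1) := by
  classical
  obtain ⟨hGm1, hGm2⟩ := hGm
  obtain ⟨hx1, hx2, hx3⟩ := hx
  -- the partner function
  set pr : ℕ → ℕ := fun v => if h : 1 ≤ v ∧ v ≤ 2*m then (hGm2 v h.1 h.2).exists.choose else 0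
    with hprdef
  have hpr : ∀ v : ℕ, 1 ≤ v → v ≤ 2*m → G.Adj v (pr v) := by
    intro v h1 h2
    simp only [hprdef, dif_pos (And.intro h1 h2)]
    exact (hGm2 v h1 h2).exists.choose_spec
  have hprU : ∀ v u : ℕ, G.Adj v u → u = pr v := by
    intro v u h
    obtain ⟨h1, h2, _, _⟩ := hGm1 v u h
    obtain ⟨u', _, huniq⟩ := hGm2 v h1 h2
    rw [huniq u h, huniq (pr v) (hpr v h1 h2)]
  have hksucc : k + 1 ≤ 2*m := hk
  -- z, the current partner of k+1
  set z : ℕ := pr (k+1) with hzdef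
  have hzadj : G.Adj (k+1) z := hpr (k+1) (by omega) hksucc
  have hzlt : z < k + 1 := by
    obtain ⟨j, hj, hadj⟩ := (hGb (k+1) (by omega) hksucc).1 hwk
    rwa [hprU (k+1) j hadj] at hj
  have hz1 : 1 ≤ z := (hGm1 _ _ hzadj.symm).1
  have hzk : z ≤ k := by omega
  have hprz : pr z = k + 1 := (hprU z (k+1) hzadj.symm).symm
  have hzstub : IsStubOn k (restrictG G k) z := by
    refine ⟨hz1, hzk, ?_⟩
    intro u hadj
    rw [adj_restrict] at hadj
    have := hprU z u hadj.1
    omega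
  have hstubpr : ∀ y : ℕ, IsStubOn k (restrictG G k) y → G.Adj y (pr y) ∧ k + 1 ≤ pr y := by
    intro y ⟨hy1, hy2, hy3⟩
    have hadj := hpr y hy1 (by omega)
    refine ⟨hadj, ?_⟩
    by_contra hle
    push_neg at hle
    exact hy3 (pr y) (adj_restrict.2 ⟨hadj, hy2, by omega⟩)
  by_cases hzx : z = x
  · exact ⟨G, ⟨hGm1, hGm2⟩, hGb, hGa, rfl, by rw [← hzx]; exact hzadj.symm⟩
  -- main case : z ≠ x
  set S : Finset ℕ := (Finset.Icc 1 k).filter (fun i => IsStubOn k (restrictG G k) i) with hSdef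
  set L : Finset ℕ :=
      (S.erase x) ∪ (Finset.Ioc (k+1) (2*m)).filter (fun i => w i = false) with hLdef
  set R : Finset ℕ := (Finset.Ioc (k+1) (2*m)).filter (fun i => w i = true) with hRdef
  have hLmem : ∀ u : ℕ, u ∈ L ↔
      ((IsStubOn k (restrictG G k) u ∧ u ≠ x) ∨ (k+1 < u ∧ u ≤ 2*m ∧ w u = false)) := by
    intro u
    simp only [hLdef, hSdef, Finset.mem_union, Finset.mem_erase, Finset.mem_filter,
      Finset.mem_Icc, Finset.mem_Ioc]
    constructor
    · rintro (⟨hne, _, hst⟩ | ⟨⟨h1, h2⟩, h3⟩)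
      · exact Or.inl ⟨hst, hne⟩
      · exact Or.inr ⟨h1, h2, h3⟩
    · rintro (⟨hst, hne⟩ | ⟨h1, h2, h3⟩)
      · exact Or.inl ⟨hne, ⟨hst.1, hst.2.1⟩, hst⟩
      · exact Or.inr ⟨⟨h1, h2⟩, h3⟩
  have hRmem : ∀ r : ℕ, r ∈ R ↔ (k+1 < r ∧ r ≤ 2*m ∧ w r = true) := by
    intro r
    simp only [hRdef, Finset.mem_filter, Finset.mem_Ioc]
    tauto
  have hxL : x ∉ L := by
    rw [hLmem]
    rintro (⟨_, hne⟩ | ⟨h1, _, _⟩)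
    · exact hne rfl
    · omega
  have hzL : z ∈ L := (hLmem z).2 (Or.inl ⟨hzstub, hzx⟩)
  set L' : Finset ℕ := insert x (L.erase z) with hL'def
  have hL'mem : ∀ u : ℕ, u ∈ L' ↔ (u = x ∨ (u ∈ L ∧ u ≠ z)) := by
    intro u
    simp only [hL'def, Finset.mem_insert, Finset.mem_erase]
    tauto
  have hprprR : ∀ r : ℕ, 1 ≤ r → r ≤ 2*m → pr (pr r) = r := by
    intro r h1 h2
    exact (hprU (pr r) r (hpr r h1 h2).symm).symm
  -- partners of R elements land in L', below them
  have hA : ∀ r ∈ R, pr r ∈ L' ∧ pr r < r := by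
    intro r hr
    rw [hRmem] at hr
    obtain ⟨hr1, hr2, hr3⟩ := hr
    have hadj : G.Adj r (pr r) := hpr r (by omega) hr2
    have hlt : pr r < r := by
      obtain ⟨j, hj, hadjj⟩ := (hGb r (by omega) hr2).1 hr3
      rwa [hprU r j hadjj] at hj
    have hprne_z : pr r ≠ z := by
      intro he
      have : G.Adj z r := by rw [← he]; exact hadj.symm
      have := hprU z r this
      omega
    have hprne_k1 : pr r ≠ k + 1 := by
      intro he
      have : G.Adj (k+1) r := by rw [← he]; exact hadj.symm
      have := hprU (k+1) r this
      omega
    have h1pr : 1 ≤ pr r := (hGm1 _ _ hadj.symm).1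
    refine ⟨?_, hlt⟩
    rw [hL'mem]
    by_cases hle : pr r ≤ k
    · have hstub : IsStubOn k (restrictG G k) (pr r) := by
        refine ⟨h1pr, hle, ?_⟩
        intro u hadju
        rw [adj_restrict] at hadju
        have := hprU (pr r) u hadju.1
        have := hprprR r (by omega) hr2
        omega
      by_cases hpx : pr r = x
      · exact Or.inl hpx
      · exact Or.inr ⟨(hLmem _).2 (Or.inl ⟨hstub, hpx⟩), hprne_z⟩
    · push_neg at hle
      have hwf : w (pr r) = false := by
        by_contra hwt
        rw [Bool.not_eq_false] at hwt
        obtain ⟨j, hj, hadjj⟩ := (hGb (pr r) (by omega) (by omega)).1 hwt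
        have := hprU (pr r) j hadjj
        have := hprprR r (by omega) hr2
        omega
      refine Or.inr ⟨(hLmem _).2 (Or.inr ⟨by omega, by omega, hwf⟩), hprne_z⟩
  -- partners of L' elements land in R, above them
  have hB : ∀ l ∈ L', pr l ∈ R ∧ l < pr l := by
    intro l hl
    rw [hL'mem] at hl
    have hstubcase : ∀ y : ℕ, IsStubOn k (restrictG G k) y → y ≠ z → pr y ∈ R ∧ y < pr y := by
      intro y hy hyz
      obtain ⟨hadj, hge⟩ := hstubpr y hy
      have hne : pr y ≠ k + 1 := by
        intro he
        have hadj2 : G.Adj (k+1) y := by rw [← he]; exact hadj.symm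
        exact hyz ((hprU (k+1) y hadj2).trans hzdef.symm)
      have h2m : pr y ≤ 2*m := (hGm1 _ _ hadj).2.2.2
      have hwt : w (pr y) = true := by
        rw [(hGb (pr y) (by omega) h2m).2]
        have hyk := hy.2.1
        exact ⟨y, by omega, hadj.symm⟩
      exact ⟨(hRmem _).2 ⟨by omega, h2m, hwt⟩, by have := hy.2.1; omega⟩
    rcases hl with hlx | ⟨hlL, hlz⟩
    · refine hstubcase l ?_ ?_
      · rw [hlx]; exact ⟨hx1, hx2, hx3⟩
      · rw [hlx]; exact fun h => hzx h.symm
    · rw [hLmem] at hlL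
      rcases hlL with ⟨hst, _⟩ | ⟨h1, h2, h3⟩
      · exact hstubcase l hst hlz
      · have hadj : G.Adj l (pr l) := hpr l (by omega) h2
        have hgt : l < pr l := by
          rcases lt_or_ge l (pr l) with h | h
          · exact h
          · exfalso
            have hne : l ≠ pr l := hadj.ne
            have hwt : w l = true := by
              rw [(hGb l (by omega) h2).2]
              exact ⟨pr l, by omega, hadj⟩
            rw [h3] at hwt
            exact Bool.false_ne_true hwt
        have h2m : pr l ≤ 2*m := (hGm1 _ _ hadj).2.2.2
        have hwt : w (pr l) = true := by
          rw [(hGb (pr l) (by omega) h2m).2]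
          exact ⟨l, hgt, hadj.symm⟩
        exact ⟨(hRmem _).2 ⟨by omega, h2m, hwt⟩, hgt⟩
  have hRbounds : ∀ r ∈ R, 1 ≤ r ∧ r ≤ 2*m := by
    intro r hr
    rw [hRmem] at hr
    omega
  have hL'bounds : ∀ l ∈ L', 1 ≤ l ∧ l ≤ 2*m := by
    intro l hl
    rw [hL'mem] at hl
    rcases hl with h | ⟨h, _⟩
    · omega
    · rw [hLmem] at h
      rcases h with ⟨⟨h1, h2, _⟩, _⟩ | ⟨h1, h2, _⟩ <;> omega
  have hcard' : R.card = L'.card := by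
    refine Finset.card_bij (fun r _ => pr r) (fun r hr => (hA r hr).1) ?_ ?_
    · intro r1 h1 r2 h2 heq
      have b1 := hRbounds r1 h1
      have b2 := hRbounds r2 h2
      rw [← hprprR r1 b1.1 b1.2, ← hprprR r2 b2.1 b2.2, heq]
    · intro l hl
      have hb := hL'bounds l hl
      exact ⟨pr l, (hB l hl).1, hprprR l hb.1 hb.2⟩
  have hxLz : x ∉ L.erase z := fun h => hxL (Finset.mem_erase.1 h).2
  have hcard : L.card = R.card := by
    rw [hcard', hL'def, Finset.card_insert_of_notMem hxLz, Finset.card_erase_of_mem hzL]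
    have : 1 ≤ L.card := Finset.card_pos.2 ⟨z, hzL⟩
    omega
  have hrank : ∀ r ∈ R, (R.filter (· ≤ r)).card ≤ (L.filter (· < r)).card := by
    intro r hr
    have hrgt : k + 1 < r := ((hRmem r).1 hr).1
    have step1 : (R.filter (· ≤ r)).card ≤ (L'.filter (· < r)).card := by
      refine Finset.card_le_card_of_injOn (fun s => pr s) ?_ ?_
      · intro s hs
        dsimp only
        rw [Finset.mem_coe, Finset.mem_filter] at hs ⊢
        obtain ⟨h1, h2⟩ := (hA s hs.1)
        exact ⟨h1, by omega⟩
      · intro s1 h1 s2 h2 heq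
        dsimp only at heq
        rw [Finset.mem_coe, Finset.mem_filter] at h1 h2
        have b1 := hRbounds s1 h1.1
        have b2 := hRbounds s2 h2.1
        rw [← hprprR s1 b1.1 b1.2, ← hprprR s2 b2.1 b2.2, heq]
    have step2 : (L'.filter (· < r)) = insert x ((L.filter (· < r)).erase z) := by
      ext u
      simp only [Finset.mem_insert, Finset.mem_erase, Finset.mem_filter]
      rw [show (u ∈ L') = (u ∈ L') from rfl]
      constructor
      · rintro ⟨hu, hur⟩
        rw [hL'mem] at hu
        rcases hu with h | ⟨h1, h2⟩
        · exact Or.inl h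
        · exact Or.inr ⟨h2, h1, hur⟩
      · rintro (h | ⟨h1, h2, h3⟩)
        · subst h
          exact ⟨(hL'mem u).2 (Or.inl rfl), by omega⟩
        · exact ⟨(hL'mem u).2 (Or.inr ⟨h2, h1⟩), h3⟩
    have hzfilter : z ∈ L.filter (· < r) := Finset.mem_filter.2 ⟨hzL, by omega⟩
    have hxnot : x ∉ (L.filter (· < r)).erase z := by
      intro h
      exact hxL (Finset.mem_filter.1 (Finset.mem_erase.1 h).2).1
    rw [step2, Finset.card_insert_of_notMem hxnot, Finset.card_erase_of_mem hzfilter] at step1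
    have : 1 ≤ (L.filter (· < r)).card := Finset.card_pos.2 ⟨z, hzfilter⟩
    omega
  obtain ⟨σ, hσ1, hσ2, hσ3⟩ := orderPairing L R hcard hrank
  have hLR : ∀ u ∈ L, u ∉ R := by
    intro u hu hur
    rw [hLmem] at hu
    rw [hRmem] at hur
    rcases hu with ⟨⟨_, h2, _⟩, _⟩ | ⟨_, _, h3⟩
    · omega
    · rw [h3] at hur
      exact Bool.false_ne_true hur.2.2
  have hLbounds : ∀ u ∈ L, 1 ≤ u ∧ u ≤ 2*m := by
    intro u hu
    rw [hLmem] at hu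
    rcases hu with ⟨⟨h1, h2, _⟩, _⟩ | ⟨h1, h2, _⟩ <;> omega
  have hLk1 : (k+1) ∉ L := by
    rw [hLmem]
    rintro (⟨⟨_, h2, _⟩, _⟩ | ⟨h1, _, _⟩) <;> omega
  have hG'bounds : ∀ u v : ℕ, (restrictG G k).Adj u v → 1 ≤ u ∧ u ≤ k ∧ 1 ≤ v ∧ v ≤ k := by
    intro u v h
    rw [adj_restrict] at h
    have := hGm1 u v h.1
    omega
  have hLnoG' : ∀ u ∈ L, ∀ v : ℕ, ¬ (restrictG G k).Adj u v := by
    intro u hu v hadj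
    rw [hLmem] at hu
    rcases hu with ⟨⟨_, _, h3⟩, _⟩ | ⟨h1, _, _⟩
    · exact h3 v hadj
    · have := hG'bounds u v hadj
      omega
  set H : SimpleGraph ℕ := SimpleGraph.fromRel
      (fun u v => (restrictG G k).Adj u v ∨ (u = x ∧ v = k+1) ∨ (u ∈ L ∧ v = σ u)) with hHdef
  have hHadj : ∀ u v : ℕ, H.Adj u v ↔ ((restrictG G k).Adj u v ∨
      ((u = x ∧ v = k+1) ∨ (v = x ∧ u = k+1)) ∨
      ((u ∈ L ∧ v = σ u) ∨ (v ∈ L ∧ u = σ v))) := by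
    intro u v
    rw [hHdef, SimpleGraph.fromRel_adj]
    constructor
    · rintro ⟨hne, (h | ⟨h1, h2⟩ | ⟨h1, h2⟩) | (h | ⟨h1, h2⟩ | ⟨h1, h2⟩)⟩
      · exact Or.inl h
      · exact Or.inr (Or.inl (Or.inl ⟨h1, h2⟩))
      · exact Or.inr (Or.inr (Or.inl ⟨h1, h2⟩))
      · exact Or.inl h.symm
      · exact Or.inr (Or.inl (Or.inr ⟨h1, h2⟩))
      · exact Or.inr (Or.inr (Or.inr ⟨h1, h2⟩))
    · rintro (h | (⟨h1, h2⟩ | ⟨h1, h2⟩) | (⟨h1, h2⟩ | ⟨h1, h2⟩))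
      · exact ⟨h.ne, Or.inl (Or.inl h)⟩
      · subst h1; subst h2
        exact ⟨by omega, Or.inl (Or.inr (Or.inl ⟨rfl, rfl⟩))⟩
      · subst h1; subst h2
        exact ⟨by omega, Or.inr (Or.inr (Or.inl ⟨rfl, rfl⟩))⟩
      · subst h2
        exact ⟨Nat.ne_of_lt (hσ1 u h1).2, Or.inl (Or.inr (Or.inr ⟨h1, rfl⟩))⟩
      · subst h2
        exact ⟨Nat.ne_of_gt (hσ1 v h1).2, Or.inr (Or.inr (Or.inr ⟨h1, rfl⟩))⟩
  have hHx : H.Adj x (k+1) := (hHadj x (k+1)).2 (Or.inr (Or.inl (Or.inl ⟨rfl, rfl⟩)))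
  have hHbounds : ∀ u v : ℕ, H.Adj u v → 1 ≤ u ∧ u ≤ 2*m ∧ 1 ≤ v ∧ v ≤ 2*m := by
    intro u v h
    rw [hHadj] at h
    rcases h with h | (⟨h1, h2⟩ | ⟨h1, h2⟩) | (⟨h1, h2⟩ | ⟨h1, h2⟩)
    · have := hG'bounds u v h
      omega
    · subst h1; subst h2; omega
    · subst h1; subst h2; omega
    · subst h2
      have := hLbounds u h1
      have := hRbounds _ (hσ1 u h1).1
      omega
    · subst h2
      have := hLbounds v h1
      have := hRbounds _ (hσ1 v h1).1
      omega
  have hHunique : ∀ v : ℕ, 1 ≤ v → v ≤ 2*m → ∃! u : ℕ, H.Adj v u := by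
    intro v hv1 hv2
    by_cases hvk : v ≤ k
    · by_cases hvm : ∃ u : ℕ, (restrictG G k).Adj v u
      · -- v is matched in G'
        obtain ⟨u, hu⟩ := hvm
        refine ⟨u, (hHadj v u).2 (Or.inl hu), ?_⟩
        intro u' h'
        rw [hHadj] at h'
        rcases h' with h | (⟨h1, h2⟩ | ⟨h1, h2⟩) | (⟨h1, h2⟩ | ⟨h1, h2⟩)
        · rw [adj_restrict] at h hu
          rw [hprU v u' h.1, hprU v u hu.1]
        · rw [h1] at hu
          exact absurd hu (hx3 u)
        · have := hG'bounds v u hu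
          omega
        · exact absurd hu (hLnoG' v h1 u)
        · have := ((hRmem _).1 (hσ1 u' h1).1).1
          have := hG'bounds v u hu
          omega
      ·
        have hvstub : IsStubOn k (restrictG G k) v := ⟨hv1, hvk, fun u h => hvm ⟨u, h⟩⟩
        by_cases hvx : v = x
        · subst hvx
          refine ⟨k+1, hHx, ?_⟩
          intro u' h'
          rw [hHadj] at h'
          rcases h' with h | (⟨h1, h2⟩ | ⟨h1, h2⟩) | (⟨h1, h2⟩ | ⟨h1, h2⟩)
          · exact absurd h (hx3 u')
          · exact h2
          · omega
          · exact absurd h1 hxL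
          · subst h2
            have := ((hRmem _).1 (hσ1 u' h1).1).1
            omega
        ·
          have hvL : v ∈ L := (hLmem v).2 (Or.inl ⟨hvstub, hvx⟩)
          refine ⟨σ v, (hHadj v (σ v)).2 (Or.inr (Or.inr (Or.inl ⟨hvL, rfl⟩))), ?_⟩
          intro u' h'
          rw [hHadj] at h'
          rcases h' with h | (⟨h1, h2⟩ | ⟨h1, h2⟩) | (⟨h1, h2⟩ | ⟨h1, h2⟩)
          · exact absurd h (hLnoG' v hvL u')
          · exact absurd h1 hvx
          · omega
          · exact h2
          · exact absurd (hσ1 u' h1).1 (fun hr => hLR v hvL (by rw [h2]; exact hr))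
    · push_neg at hvk
      by_cases hvk1 : v = k + 1
      · subst hvk1
        refine ⟨x, hHx.symm, ?_⟩
        intro u' h'
        rw [hHadj] at h'
        rcases h' with h | (⟨h1, h2⟩ | ⟨h1, h2⟩) | (⟨h1, h2⟩ | ⟨h1, h2⟩)
        · have := hG'bounds _ _ h
          omega
        · omega
        · exact h1
        · exact absurd h1 hLk1
        · have := ((hRmem _).1 (hσ1 u' h1).1).1
          omega
      · -- v > k+1
        have hvgt : k + 1 < v := by omega
        by_cases hvw : w v = true
        · -- v ∈ R
          have hvR : v ∈ R := (hRmem v).2 ⟨hvgt, hv2, hvw⟩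
          obtain ⟨u, huL, huσ⟩ := hσ3 v hvR
          refine ⟨u, (hHadj v u).2 (Or.inr (Or.inr (Or.inr ⟨huL, huσ.symm⟩))), ?_⟩
          intro u' h'
          rw [hHadj] at h'
          rcases h' with h | (⟨h1, h2⟩ | ⟨h1, h2⟩) | (⟨h1, h2⟩ | ⟨h1, h2⟩)
          · have := hG'bounds _ _ h
            omega
          · omega
          · omega
          · subst h2
            exact absurd hvR (hLR v h1)
          · subst h2
            rcases lt_trichotomy u' u with h | h | h
            · exact absurd (huσ.symm) (Nat.ne_of_gt (hσ2 u' h1 u huL h)).symm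
            · exact h
            · exact absurd (huσ.symm) (Nat.ne_of_lt (hσ2 u huL u' h1 h)).symm
        · -- v ∈ L (future l-vertex)
          have hvL : v ∈ L := (hLmem v).2 (Or.inr ⟨hvgt, hv2, by simpa using hvw⟩)
          refine ⟨σ v, (hHadj v (σ v)).2 (Or.inr (Or.inr (Or.inl ⟨hvL, rfl⟩))), ?_⟩
          intro u' h'
          rw [hHadj] at h'
          rcases h' with h | (⟨h1, h2⟩ | ⟨h1, h2⟩) | (⟨h1, h2⟩ | ⟨h1, h2⟩)
          · exact absurd h (hLnoG' v hvL u')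
          · subst h1
            omega
          · omega
          · exact h2
          · exact absurd (hσ1 u' h1).1 (fun hr => hLR v hvL (by rw [h2]; exact hr))
  have hHbase : HasBase (2*m) H w := by
    intro i h1 h2
    by_cases hik : i ≤ k
    · constructor
      · intro hwi
        obtain ⟨j, hj, hadj⟩ := (hGb i h1 (by omega)).1 hwi
        refine ⟨j, hj, (hHadj i j).2 (Or.inl (adj_restrict.2 ⟨hadj, by omega, by omega⟩))⟩
      · rintro ⟨j, hj, hadj⟩
        rw [hHadj] at hadj
        rcases hadj with h | (⟨ha, hb⟩ | ⟨ha, hb⟩) | (⟨ha, hb⟩ | ⟨ha, hb⟩)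
        · rw [adj_restrict] at h
          exact (hGb i h1 (by omega)).2 ⟨j, hj, h.1⟩
        · omega
        · omega
        · have := (hσ1 i ha).2
          omega
        · have := ((hRmem _).1 (hσ1 j ha).1).1
          omega
    · by_cases hik1 : i = k + 1
      · subst hik1
        rw [hwk]
        exact ⟨fun _ => ⟨x, by omega, hHx.symm⟩, fun _ => rfl⟩
      · have higt : k + 1 < i := by omega
        by_cases hwi : w i = true
        · rw [hwi]
          obtain ⟨u, huL, huσ⟩ := hσ3 i ((hRmem i).2 ⟨higt, h2, hwi⟩)
          have hult : u < i := by
            have := (hσ1 u huL).2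
            omega
          exact ⟨fun _ => ⟨u, hult,
            (hHadj i u).2 (Or.inr (Or.inr (Or.inr ⟨huL, huσ.symm⟩)))⟩, fun _ => rfl⟩
        · constructor
          · intro h
            exact absurd h hwi
          · rintro ⟨j, hj, hadj⟩
            exfalso
            rw [hHadj] at hadj
            rcases hadj with h | (⟨ha, hb⟩ | ⟨ha, hb⟩) | (⟨ha, hb⟩ | ⟨ha, hb⟩)
            · have := hG'bounds i j h
              omega
            · have : x ≤ k := hx2
              omega
            · omega
            · have := (hσ1 i ha).2
              omega
            · have : i ∈ R := by rw [hb]; exact (hσ1 j ha).1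
              rw [hRmem] at this
              rw [this.2.2] at hwi
              exact hwi rfl
  have hrest : restrictG H k = restrictG G k := by
    ext u v
    rw [adj_restrict]
    constructor
    · rintro ⟨hadj, hu, hv⟩
      rw [hHadj] at hadj
      rcases hadj with h | (⟨ha, hb⟩ | ⟨ha, hb⟩) | (⟨ha, hb⟩ | ⟨ha, hb⟩)
      · exact h
      · omega
      · omega
      · have := ((hRmem _).1 (hσ1 u ha).1).1
        omega
      · have := ((hRmem _).1 (hσ1 v ha).1).1
        omega
    · intro hadj
      have := hG'bounds u v hadj
      exact ⟨(hHadj u v).2 (Or.inl hadj), by omega, by omega⟩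
  have hclass : ∀ a b : ℕ, H.Adj a b → a < b →
      (((restrictG G k).Adj a b ∧ b ≤ k) ∨ (a = x ∧ b = k+1) ∨
        (a ∈ L ∧ b = σ a ∧ k+1 < b)) := by
    intro a b hadj hab
    rw [hHadj] at hadj
    rcases hadj with h | (⟨ha, hb⟩ | ⟨ha, hb⟩) | (⟨ha, hb⟩ | ⟨ha, hb⟩)
    · exact Or.inl ⟨h, (hG'bounds a b h).2.2.2⟩
    · exact Or.inr (Or.inl ⟨ha, hb⟩)
    · have : x ≤ k := hx2
      omega
    · refine Or.inr (Or.inr ⟨ha, hb, ?_⟩)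
      have := ((hRmem _).1 (hσ1 a ha).1).1
      omega
    · have := (hσ1 b ha).2
      omega
  have hstubL : ∀ a ∈ L, a ≤ k → IsStubOn k (restrictG G k) a ∧ a ≠ x := by
    intro a ha hak
    rw [hLmem] at ha
    rcases ha with h | h
    · exact h
    · omega
  have hHavoid : ¬ ContainsPat H M132 := by
    intro hcon
    obtain ⟨a1, a2, a3, b1, b3, b2, h12, h23, h31, h13, h32, e1, e2, e3⟩ :=
      contains_pattern hcon
    have c1 := hclass a1 b1 e1 (by omega)
    have c2 := hclass a2 b2 e2 (by omega)
    have c3 := hclass a3 b3 e3 (by omega)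
    have h0 : 0 < a1 := (hHbounds a1 b1 e1).1
    rcases c2 with ⟨g2, hb2⟩ | ⟨hax, hbk⟩ | ⟨haL, hbσ, hbgt⟩
    · -- e2 inside G'
      have c3' : (restrictG G k).Adj a3 b3 := by
        rcases c3 with ⟨g3, _⟩ | ⟨_, h⟩ | ⟨_, _, h⟩ <;> first | exact g3 | omega
      have c1' : (restrictG G k).Adj a1 b1 := by
        rcases c1 with ⟨g1, _⟩ | ⟨_, h⟩ | ⟨_, _, h⟩ <;> first | exact g1 | omega
      exact hGa (pattern_contains h0 h12 h23 h31 h13 h32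
        (adj_restrict.1 c1').1 (adj_restrict.1 g2).1 (adj_restrict.1 c3').1)
    · -- e2 = (x, k+1)
      have hb3k : b3 ≤ k := by omega
      have c3' : (restrictG G k).Adj a3 b3 := by
        rcases c3 with ⟨g3, _⟩ | ⟨_, h⟩ | ⟨_, _, h⟩ <;> first | exact g3 | omega
      have c1' : (restrictG G k).Adj a1 b1 := by
        rcases c1 with ⟨g1, _⟩ | ⟨_, h⟩ | ⟨_, _, h⟩ <;> first | exact g1 | omega
      obtain ⟨hadj2, hpr2⟩ := hstubpr x ⟨hx1, hx2, hx3⟩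
      refine hGa (pattern_contains h0 h12 h23 h31 h13 (show b3 < pr x by omega)
        (adj_restrict.1 c1').1 ?_ (adj_restrict.1 c3').1)
      rw [hax]
      exact hadj2
    · -- e2 is a new edge, a2 ∈ L
      rcases c3 with ⟨g3, hb3⟩ | ⟨hax3, hbk3⟩ | ⟨haL3, hbσ3, hbgt3⟩
      · -- e3 inside G'
        have c1' : (restrictG G k).Adj a1 b1 := by
          rcases c1 with ⟨g1, _⟩ | ⟨_, h⟩ | ⟨_, _, h⟩ <;> first | exact g1 | omega
        have ha3k : a3 ≤ k := (hG'bounds a3 b3 g3).2.1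
        obtain ⟨hstub2, _⟩ := hstubL a2 haL (by omega)
        obtain ⟨hadj2, hpr2⟩ := hstubpr a2 hstub2
        exact hGa (pattern_contains h0 h12 h23 h31 h13 (show b3 < pr a2 by omega)
          (adj_restrict.1 c1').1 hadj2 (adj_restrict.1 g3).1)
      · -- e3 = (x, k+1)
        have c1' : (restrictG G k).Adj a1 b1 ∧ b1 ≤ k := by
          rcases c1 with ⟨g1, hh⟩ | ⟨_, h⟩ | ⟨_, _, h⟩ <;> first | exact ⟨g1, hh⟩ | omega
        obtain ⟨hstub2, hne2⟩ := hstubL a2 haL (by omega)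
        have hsim : SimRel (restrictG G k) x a2 := by
          refine Or.inr ⟨a1, b1, c1'.1, ?_, ?_, ?_, ?_⟩ <;> omega
        have := hxmin a2 hstub2 hsim
        omega
      · -- e3 also a new edge : nested new pair, contradiction
        have := hσ2 a2 haL a3 haL3 h23
        omega
  exact ⟨H, ⟨hHbounds, hHunique⟩, hHbase, hHavoid, hrest, hHx⟩
lemma partner_props (m k : ℕ) (w : ℕ → Bool) (hk : k < 2*m) (hwk : w (k+1) = true)
    (G : SimpleGraph ℕ) (hGm : IsMatchingOn (2*m) G) (hGb : HasBase (2*m) G w)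
    (hGa : ¬ ContainsPat G M132) :
    ∃ x : ℕ, G.Adj (k+1) x ∧ x ≤ k ∧ IsStubOn k (restrictG G k) x ∧
      (∀ y : ℕ, IsStubOn k (restrictG G k) y → SimRel (restrictG G k) x y → x ≤ y) ∧
      (∀ u : ℕ, G.Adj (k+1) u → u = x) := by
  obtain ⟨hGm1, hGm2⟩ := hGm
  have hk1 : 1 ≤ k + 1 := by omega
  have hk2 : k + 1 ≤ 2*m := hk
  obtain ⟨j, hj, hadj⟩ := (hGb (k+1) hk1 hk2).1 hwk
  obtain ⟨u0, hu0, huniq⟩ := hGm2 (k+1) hk1 hk2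
  have huu : ∀ u : ℕ, G.Adj (k+1) u → u = j := by
    intro u hu
    rw [huniq u hu, ← huniq j hadj]
  have hj1 : 1 ≤ j := (hGm1 _ _ hadj).2.2.1
  have hjk : j ≤ k := by omega
  have hjstub : IsStubOn k (restrictG G k) j := by
    refine ⟨hj1, hjk, ?_⟩
    intro u hu
    rw [adj_restrict] at hu
    obtain ⟨w0, _, hwuniq⟩ := hGm2 j hj1 (by omega)
    have h1 := hwuniq u hu.1
    have h2 := hwuniq (k+1) hadj.symm
    have := hu.2.2
    omega
  refine ⟨j, hadj, hjk, hjstub, ?_, huu⟩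
  intro y hy hsim
  by_contra hlt
  push_neg at hlt
  rcases hsim with he | ⟨a, b, hab, h1, h2, h3, h4⟩
  · omega
  · -- y < j, both inside span of (a,b) : build M132 in G
    obtain ⟨hy1, hy2, hy3⟩ := hy
    have hyadj := (hGm2 y hy1 (by omega)).exists
    obtain ⟨B, hB⟩ := hyadj
    have hBk : k < B := by
      by_contra hBle
      push_neg at hBle
      exact hy3 B (adj_restrict.2 ⟨hB, hy2, hBle⟩)
    have hBne : B ≠ k + 1 := by
      intro he
      have := huu y (he ▸ hB.symm)
      omega
    have hbk : b ≤ k := (adj_restrict.1 hab).2.2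
    have hGab : G.Adj a b := (adj_restrict.1 hab).1
    have h0 : 0 < a := (hGm1 _ _ hGab).1
    exact hGa (pattern_contains h0 h3 (by omega) (by omega) (by omega) (by omega)
      hGab hB hadj.symm)

lemma restrict_succ_eq (k x : ℕ) (G : SimpleGraph ℕ)
    (hadj : G.Adj (k+1) x) (hxk : x ≤ k) (huniq : ∀ u : ℕ, G.Adj (k+1) u → u = x) :
    restrictG G (k+1) = SimpleGraph.fromRel
      (fun u v => (restrictG G k).Adj u v ∨ (u = x ∧ v = k+1)) := by
  ext u v
  rw [adj_restrict, SimpleGraph.fromRel_adj]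
  constructor
  · rintro ⟨hadj', hu, hv⟩
    refine ⟨hadj'.ne, ?_⟩
    by_cases huk : u ≤ k
    · by_cases hvk : v ≤ k
      · exact Or.inl (Or.inl (adj_restrict.2 ⟨hadj', huk, hvk⟩))
      · have hv1 : v = k + 1 := by omega
        have hux : u = x := huniq u (by rw [← hv1]; exact hadj'.symm)
        exact Or.inl (Or.inr ⟨hux, hv1⟩)
    · have hu1 : u = k + 1 := by omega
      have hvk : v ≤ k := by
        rcases Nat.lt_or_ge v (k+1) with h | h
        · omega
        · exfalso
          exact hadj'.ne (by omega)
      have hvx : v = x := huniq v (by rw [← hu1]; exact hadj')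
      exact Or.inr (Or.inr ⟨hvx, hu1⟩)
  · rintro ⟨hne, (h | ⟨h1, h2⟩) | (h | ⟨h1, h2⟩)⟩
    · obtain ⟨ha, h1, h2⟩ := adj_restrict.1 h
      exact ⟨ha, by omega, by omega⟩
    · subst h1; subst h2
      exact ⟨hadj.symm, by omega, le_refl _⟩
    · obtain ⟨ha, h1, h2⟩ := adj_restrict.1 h
      exact ⟨ha.symm, by omega, by omega⟩
    · subst h1; subst h2
      exact ⟨hadj, le_refl _, by omega⟩

lemma stub_partner_gt (m k : ℕ) (G : SimpleGraph ℕ) (hk : k < 2*m)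
    (hGm : IsMatchingOn (2*m) G) (y : ℕ) (hy : IsStubOn k (restrictG G k) y) :
    ∃ B : ℕ, G.Adj y B ∧ k < B ∧ B ≤ 2*m := by
  obtain ⟨hy1, hy2, hy3⟩ := hy
  obtain ⟨B, hB⟩ := (hGm.2 y hy1 (by omega)).exists
  refine ⟨B, hB, ?_, (hGm.1 _ _ hB).2.2.2⟩
  by_contra hle
  push_neg at hle
  exact hy3 B (adj_restrict.2 ⟨hB, hy2, hle⟩)

lemma sim_trans (m k : ℕ) (G : SimpleGraph ℕ) (hk : k < 2*m)
    (hGm : IsMatchingOn (2*m) G) (hGa : ¬ ContainsPat G M132)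
    {u v t : ℕ} (hu : IsStubOn k (restrictG G k) u) (hv : IsStubOn k (restrictG G k) v)
    (ht : IsStubOn k (restrictG G k) t)
    (h1 : SimRel (restrictG G k) u v) (h2 : SimRel (restrictG G k) v t) :
    SimRel (restrictG G k) u t := by
  rcases h1 with rfl | ⟨a, b, hab, ha1, ha2, ha3, ha4⟩
  · exact h2
  rcases h2 with rfl | ⟨c, d, hcd, hc1, hc2, hc3, hc4⟩
  · exact Or.inr ⟨a, b, hab, ha1, ha2, ha3, ha4⟩
  by_cases hta : a < t ∧ t < b
  · exact Or.inr ⟨a, b, hab, ha1, ha2, hta.1, hta.2⟩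
  by_cases huc : c < u ∧ u < d
  · exact Or.inr ⟨c, d, hcd, huc.1, huc.2, hc3, hc4⟩
  exfalso
  push_neg at hta huc
  have hGab := adj_restrict.1 hab
  have hGcd := adj_restrict.1 hcd
  have hta' : t ≠ a := by
    intro he
    exact ht.2.2 b (he ▸ hab)
  have htb' : t ≠ b := by
    intro he
    exact ht.2.2 a (he ▸ hab.symm)
  have huc' : u ≠ c := by
    intro he
    exact hu.2.2 d (he ▸ hcd)
  have hud' : u ≠ d := by
    intro he
    exact hu.2.2 c (he ▸ hcd.symm)
  have htcases : t < a ∨ b < t := by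
    rcases Nat.lt_or_ge t a with h | h
    · exact Or.inl h
    · rcases Nat.lt_or_ge t b with h' | h'
      · exact absurd (hta (by omega)) (by omega)
      · right; omega
  have hucases : u < c ∨ d < u := by
    rcases Nat.lt_or_ge u c with h | h
    · exact Or.inl h
    · rcases Nat.lt_or_ge u d with h' | h'
      · exact absurd (huc (by omega)) (by omega)
      · right; omega
  obtain ⟨pu, hpu, hpuk, _⟩ := stub_partner_gt m k G hk hGm u hu
  obtain ⟨pt, hpt, hptk, _⟩ := stub_partner_gt m k G hk hGm t ht
  have hbk : b ≤ k := hGab.2.2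
  have hdk : d ≤ k := hGcd.2.2
  have h0a : 0 < a := (hGm.1 _ _ hGab.1).1
  have h0c : 0 < c := (hGm.1 _ _ hGcd.1).1
  rcases htcases with hta2 | hta2 <;> rcases hucases with huc2 | huc2
  · -- t < a, u < c : contradiction by ordering
    omega
  · -- t < a, d < u : pattern c < t < a < d < b < pt
    exact hGa (pattern_contains h0c (by omega) (by omega) (by omega) (by omega) (by omega)
      hGcd.1 hpt hGab.1)
  · -- b < t, u < c : pattern a < u < c < b < d < pu
    exact hGa (pattern_contains h0a (by omega) (by omega) (by omega) (by omega) (by omega)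
      hGab.1 hpu hGcd.1)
  · -- b < t, d < u : contradiction by ordering
    omega
lemma simrel_symm {G' : SimpleGraph ℕ} {p q : ℕ} (h : SimRel G' p q) : SimRel G' q p := by
  rcases h with rfl | ⟨a, b, hab, h1, h2, h3, h4⟩
  · exact Or.inl rfl
  · exact Or.inr ⟨a, b, hab, h3, h4, h1, h2⟩

/-- if `G' = G[k]` for some matching `G` on `[2m]` with base `w` avoiding
`M_132`, and `w_{k+1} = 1`, then every stub `x` of `G'` that is the minimum of its
`∼`-block extends to such a matching `H` with `H[k] = G'` and `{x,k+1}` an edge of `H`;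
consequently the number of distinct graphs `G[k+1]` over all such `G` with `G[k] = G'`
equals the number of `∼`-blocks of `G'`. -/
theorem stmt11 (m k : ℕ) (hm : 0 < m) (w : ℕ → Bool) (hw : IsDyckWord (2*m) w)
    (hk : k < 2*m) (hwk : w (k+1) = true) (G' : SimpleGraph ℕ)
    (hcons : ∃ G : SimpleGraph ℕ, IsMatchingOn (2*m) G ∧ HasBase (2*m) G w ∧
      ¬ ContainsPat G M132 ∧ restrictG G k = G') :
    (∀ x : ℕ, IsStubOn k G' x →
      (∀ y : ℕ, IsStubOn k G' y → SimRel G' x y → x ≤ y) →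
      ∃ H : SimpleGraph ℕ, IsMatchingOn (2*m) H ∧ HasBase (2*m) H w ∧
        ¬ ContainsPat H M132 ∧ restrictG H k = G' ∧ H.Adj x (k+1)) ∧
    Nat.card {G'' : SimpleGraph ℕ // ∃ G : SimpleGraph ℕ, IsMatchingOn (2*m) G ∧
        HasBase (2*m) G w ∧ ¬ ContainsPat G M132 ∧ restrictG G k = G' ∧
        restrictG G (k+1) = G''} =
    Nat.card {B : Set ℕ // ∃ x : ℕ, IsStubOn k G' x ∧
        B = {y : ℕ | IsStubOn k G' y ∧ SimRel G' x y}} := by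
  classical
  obtain ⟨G, hGm, hGb, hGa, hGr⟩ := hcons
  subst hGr
  constructor
  · intro x hx hxmin
    exact extend_lemma m k w hk hwk G hGm hGb hGa x hx hxmin
  -- counting part
  set Smin : Type := {x : ℕ // IsStubOn k (restrictG G k) x ∧
      ∀ y : ℕ, IsStubOn k (restrictG G k) y → SimRel (restrictG G k) x y → x ≤ y} with hSmin
  set ext : ℕ → SimpleGraph ℕ := fun x => SimpleGraph.fromRel
      (fun u v => (restrictG G k).Adj u v ∨ (u = x ∧ v = k+1)) with hext
  have hextadj : ∀ x : ℕ, x ≤ k → (ext x).Adj x (k+1) := by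
    intro x hxk
    rw [hext, SimpleGraph.fromRel_adj]
    exact ⟨by omega, Or.inl (Or.inr ⟨rfl, rfl⟩)⟩
  have hextx : ∀ x y : ℕ, x ≤ k → y ≤ k → ext x = ext y → x = y := by
    intro x y hxk hyk heq
    have h1 : (ext x).Adj x (k+1) := hextadj x hxk
    rw [heq, hext, SimpleGraph.fromRel_adj] at h1
    rcases h1 with ⟨hne, (h | ⟨h1, h2⟩) | (h | ⟨h1, h2⟩)⟩
    · have := adj_restrict.1 h
      omega
    · exact h1
    · have := adj_restrict.1 h
      omega
    · omega
  have hf1 : ∀ x : ℕ, IsStubOn k (restrictG G k) x →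
      (∀ y : ℕ, IsStubOn k (restrictG G k) y → SimRel (restrictG G k) x y → x ≤ y) →
      ∃ G1 : SimpleGraph ℕ, IsMatchingOn (2*m) G1 ∧ HasBase (2*m) G1 w ∧
        ¬ ContainsPat G1 M132 ∧ restrictG G1 k = restrictG G k ∧
        restrictG G1 (k+1) = ext x := by
    intro x hx hxmin
    obtain ⟨H, hHm, hHb, hHa, hHr, hHx⟩ := extend_lemma m k w hk hwk G hGm hGb hGa x hx hxmin
    refine ⟨H, hHm, hHb, hHa, hHr, ?_⟩
    obtain ⟨u0, hu0, huniq⟩ := hHm.2 (k+1) (by omega) (by omega)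
    have huu : ∀ u : ℕ, H.Adj (k+1) u → u = x := by
      intro u hu
      rw [huniq u hu, ← huniq x hHx.symm]
    rw [restrict_succ_eq k x H hHx.symm hx.2.1 huu, hHr, hext]
  set f1 : Smin → {G'' : SimpleGraph ℕ // ∃ G1 : SimpleGraph ℕ, IsMatchingOn (2*m) G1 ∧
      HasBase (2*m) G1 w ∧ ¬ ContainsPat G1 M132 ∧ restrictG G1 k = restrictG G k ∧
      restrictG G1 (k+1) = G''} :=
    fun p => ⟨ext p.1, hf1 p.1 p.2.1 p.2.2⟩ with hf1def
  have hbij1 : Function.Bijective f1 := by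
    constructor
    · rintro ⟨x, hx⟩ ⟨y, hy⟩ heq
      have : ext x = ext y := congrArg Subtype.val heq
      exact Subtype.ext (hextx x y hx.1.2.1 hy.1.2.1 this)
    · rintro ⟨G'', G1, hm1, hb1, ha1, hr1, hr2⟩
      obtain ⟨x1, hadj1, hx1k, hstub1, hmin1, huniq1⟩ :=
        partner_props m k w hk hwk G1 hm1 hb1 ha1
      rw [hr1] at hstub1 hmin1
      refine ⟨⟨x1, hstub1, hmin1⟩, Subtype.ext ?_⟩
      show ext x1 = G''
      rw [← hr2, restrict_succ_eq k x1 G1 hadj1 hx1k huniq1, hr1, hext]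
  set f2 : Smin → {B : Set ℕ // ∃ x : ℕ, IsStubOn k (restrictG G k) x ∧
      B = {y : ℕ | IsStubOn k (restrictG G k) y ∧ SimRel (restrictG G k) x y}} :=
    fun p => ⟨{y : ℕ | IsStubOn k (restrictG G k) y ∧ SimRel (restrictG G k) p.1 y},
      p.1, p.2.1, rfl⟩ with hf2def
  have hbij2 : Function.Bijective f2 := by
    constructor
    · rintro ⟨x, hx, hxmin⟩ ⟨y, hy, hymin⟩ heq
      have heq' : {t : ℕ | IsStubOn k (restrictG G k) t ∧ SimRel (restrictG G k) x t} =
          {t : ℕ | IsStubOn k (restrictG G k) t ∧ SimRel (restrictG G k) y t} :=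
        congrArg Subtype.val heq
      have hxy : y ≤ x := by
        have : x ∈ {t : ℕ | IsStubOn k (restrictG G k) t ∧ SimRel (restrictG G k) y t} := by
          rw [← heq']
          exact ⟨hx, Or.inl rfl⟩
        exact hymin x this.1 this.2
      have hyx : x ≤ y := by
        have : y ∈ {t : ℕ | IsStubOn k (restrictG G k) t ∧ SimRel (restrictG G k) x t} := by
          rw [heq']
          exact ⟨hy, Or.inl rfl⟩
        exact hxmin y this.1 this.2
      exact Subtype.ext (le_antisymm hyx hxy)
    · rintro ⟨B, z, hz, hBeq⟩
      set X : Set ℕ := {y : ℕ | IsStubOn k (restrictG G k) y ∧ SimRel (restrictG G k) z y}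
        with hXdef
      have hzX : z ∈ X := ⟨hz, Or.inl rfl⟩
      have hXne : X.Nonempty := ⟨z, hzX⟩
      set x : ℕ := sInf X with hxdef
      have hxX : x ∈ X := Nat.sInf_mem hXne
      have hxmin : ∀ y : ℕ, IsStubOn k (restrictG G k) y →
          SimRel (restrictG G k) x y → x ≤ y := by
        intro y hy hsim
        have hyX : y ∈ X := ⟨hy, sim_trans m k G hk hGm hGa hz hxX.1 hy hxX.2 hsim⟩
        exact Nat.sInf_le hyX
      refine ⟨⟨x, hxX.1, hxmin⟩, Subtype.ext ?_⟩
      show {y : ℕ | IsStubOn k (restrictG G k) y ∧ SimRel (restrictG G k) x y} = B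
      rw [hBeq]
      ext y
      simp only [Set.mem_setOf_eq]
      constructor
      · rintro ⟨hy, hsim⟩
        exact ⟨hy, sim_trans m k G hk hGm hGa hz hxX.1 hy hxX.2 hsim⟩
      · rintro ⟨hy, hsim⟩
        exact ⟨hy, sim_trans m k G hk hGm hGa hxX.1 hz hy (simrel_symm hxX.2) hsim⟩
  exact (Nat.card_eq_of_bijective f1 hbij1).symm.trans (Nat.card_eq_of_bijective f2 hbij2)
end
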